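/- arXiv:math/0406170 — 11 statements merged into one kernel-verified Lean document; each statement's English description precedes it below -/
import Mathlib

section
/- Let c ∈ ℂ and let ψ = σ·e^{-σ}·(1+cσ)^{-1}, a formal power series in σ over ℂ of order 1 (here e^{-σ} = Σ_{m≥0} (-σ)^m/m! and (1+cσ)^{-1} is the formal inverse of 1+cσ). Then in the ring of formal power series in σ with coefficients in the polynomial ring ℂ[x], one has Σ_{n=0}^∞ Q_n(x)·ψ^{n+1} = σ·Σ_{m=0}^∞ (x-1)^m σ^m/m!; the family on the left is summable because ψ^{n+1} has order n+1. -/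
/-!
Let `T` be the operator `p ↦ c·p(x+1) + ∫₀ˣ p(y+1) dy`, so that `Q (n+1) = T (Q n)`, and let `T`
act coefficientwise on `ℂ[x]⟦σ⟧`; being `ℂ`-linear, it commutes with multiplication by `ψ`.
Hence the partial sums `S N = Σ_{n<N} Q n·ψ^{n+1}` satisfy `S (N+1) = ψ·(1 + T (S N))`.
The series `F = σ·e^{(x-1)σ}` is a fixed point of the same map: `1 + T F = (1 + cσ)·e^{xσ}` and
`ψ·(1 + cσ) = σ·e^{-σ}`. As `σ ∣ ψ`, induction gives `σ^N ∣ F - S N`, which identifies the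
coefficients of `F`.
-/

namespace Polynomial

variable {K : Type*} [Field K]

noncomputable def antideriv : K[X] →ₗ[K] K[X] :=
  lsum fun k => (k + 1 : K)⁻¹ • monomial (k + 1)

theorem antideriv_monomial (k : ℕ) (a : K) :
    antideriv (monomial k a) = monomial (k + 1) (a / (k + 1)) := by
  simp [antideriv, smul_monomial, div_eq_inv_mul]

theorem derivative_antideriv [CharZero K] (p : K[X]) : derivative (antideriv p) = p := by
  induction p using Polynomial.induction_on' with
  | add p q hp hq => simp [hp, hq]
  | monomial k a =>
    rw [antideriv_monomial, derivative_monomial, Nat.add_sub_cancel, Nat.cast_add_one,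
      div_mul_cancel₀ a (Nat.cast_add_one_ne_zero k)]

theorem eval_zero_antideriv (p : K[X]) : (antideriv p).eval 0 = 0 := by
  induction p using Polynomial.induction_on' with
  | add p q hp hq => simp [hp, hq]
  | monomial k a => simp [antideriv_monomial]

theorem integral_eval_ofReal (p : ℂ[X]) (a b : ℝ) :
    ∫ y in a..b, p.eval (y : ℂ) = (antideriv p).eval (b : ℂ) - (antideriv p).eval (a : ℂ) := by
  refine intervalIntegral.integral_eq_sub_of_hasDerivAt
    (f := fun y : ℝ => (antideriv p).eval (y : ℂ)) (fun y _ => ?_)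
    ((by fun_prop : Continuous fun y : ℝ => p.eval (y : ℂ)).intervalIntegrable _ _)
  simpa [derivative_antideriv] using ((antideriv p).hasDerivAt (y : ℂ)).comp_ofReal

noncomputable def shiftIntegral (c : K) : K[X] →ₗ[K] K[X] :=
  (c • LinearMap.id + antideriv) ∘ₗ taylor 1

theorem eq_shiftIntegral_of_forall_eval {P Q : ℂ[X]} (c : ℂ)
    (h : ∀ x : ℝ,
      P.eval (x : ℂ) = c * Q.eval ((x : ℂ) + 1) + ∫ y in (0:ℝ)..x, Q.eval ((y : ℂ) + 1)) :
    P = shiftIntegral c Q := by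
  refine eq_of_infinite_eval_eq _ _
    ((Set.infinite_range_of_injective Complex.ofReal_injective).mono ?_)
  rintro _ ⟨x, rfl⟩
  simp only [shiftIntegral, Set.mem_ofPred_eq, h, ← taylor_eval, integral_eval_ofReal]
  simp [eval_zero_antideriv]

theorem shiftIntegral_X_sub_one_pow_mul [CharZero K] (c : K) (m : ℕ) :
    shiftIntegral c ((X - 1) ^ m * C (m.factorial : K)⁻¹) =
      C c * (X ^ m * C (m.factorial : K)⁻¹) + X ^ (m + 1) * C ((m + 1).factorial : K)⁻¹ := by
  have hshift : taylor 1 ((X - 1 : K[X]) ^ m * C (m.factorial : K)⁻¹) =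
      monomial m (m.factorial : K)⁻¹ := by
    simp [taylor_mul, taylor_pow, taylor_X, C_mul_X_pow_eq_monomial]
  rw [shiftIntegral, LinearMap.comp_apply, hshift, LinearMap.add_apply, antideriv_monomial]
  simp only [LinearMap.smul_apply, LinearMap.id_apply, smul_eq_C_mul, ← C_mul_X_pow_eq_monomial,
    Nat.factorial_succ, Nat.cast_mul, Nat.cast_add_one, mul_inv, C_mul, div_eq_mul_inv]
  ring

end Polynomial

namespace PowerSeries

open Finset

section Coeffwise

variable {R A B : Type*} [CommSemiring R] [CommSemiring A] [Algebra R A] [CommSemiring B]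
  [Algebra R B]

noncomputable def coeffwise (f : A →ₗ[R] B) : A⟦X⟧ →ₗ[R] B⟦X⟧ where
  toFun G := mk fun m => f (coeff m G)
  map_add' G H := by ext; simp
  map_smul' r G := by ext; simp

@[simp]
theorem coeff_coeffwise (f : A →ₗ[R] B) (G : A⟦X⟧) (m : ℕ) :
    coeff m (coeffwise f G) = f (coeff m G) := by
  simp [coeffwise]

theorem coeffwise_C (f : A →ₗ[R] B) (a : A) : coeffwise f (C a) = C (f a) := by
  ext m
  rcases m with _ | m <;> simp [coeff_C]

theorem coeffwise_map_algebraMap_mul (f : A →ₗ[R] B) (φ : R⟦X⟧) (G : A⟦X⟧) :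
    coeffwise f (φ.map (algebraMap R A) * G) = φ.map (algebraMap R B) * coeffwise f G := by
  ext m
  simp [coeff_mul, Algebra.algebraMap_eq_smul_one, map_sum]

theorem X_pow_dvd_coeffwise (f : A →ₗ[R] B) {G : A⟦X⟧} {N : ℕ} (hG : X ^ N ∣ G) :
    X ^ N ∣ coeffwise f G := by
  rw [X_pow_dvd_iff] at hG ⊢
  intro m hm
  simp [hG m hm]

end Coeffwise

section FixedPoint

variable {R A : Type*} [CommSemiring R] [CommRing A] [Algebra R A] {φ : R⟦X⟧} {f : A →ₗ[R] A}
  {q : ℕ → A} {F : A⟦X⟧}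

theorem X_pow_dvd_sub_sum (hφ : X ∣ φ) (hq : ∀ n, q (n + 1) = f (q n))
    (hF : F = φ.map (algebraMap R A) * (C (q 0) + coeffwise f F)) (N : ℕ) :
    X ^ N ∣ F - ∑ n ∈ range N, C (q n) * φ.map (algebraMap R A) ^ (n + 1) := by
  set Φ := φ.map (algebraMap R A)
  induction N with
  | zero => simp
  | succ N ih =>
    have hΦ : X ∣ Φ := by simpa [Φ] using map_dvd (map (algebraMap R A)) hφ
    have hterm (n : ℕ) : coeffwise f (C (q n) * Φ ^ (n + 1)) = C (q (n + 1)) * Φ ^ (n + 1) := by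
      rw [mul_comm, ← map_pow, coeffwise_map_algebraMap_mul, coeffwise_C, hq, map_pow, mul_comm]
    have hshift : ∑ n ∈ range N, C (q (n + 1)) * Φ ^ (n + 1 + 1) =
        Φ * ∑ n ∈ range N, C (q (n + 1)) * Φ ^ (n + 1) := by
      rw [mul_sum]
      exact sum_congr rfl fun n _ => by ring
    have hstep : F - ∑ n ∈ range (N + 1), C (q n) * Φ ^ (n + 1) =
        Φ * coeffwise f (F - ∑ n ∈ range N, C (q n) * Φ ^ (n + 1)) := by
      rw [map_sub, map_sum, sum_congr rfl fun n _ => hterm n, sum_range_succ', hshift]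
      conv_lhs => rw [hF]
      ring
    rw [hstep, pow_succ']
    exact mul_dvd_mul hΦ (X_pow_dvd_coeffwise f ih)

theorem coeff_eq_sum_of_eq_mul_add_coeffwise (hφ : X ∣ φ) (hq : ∀ n, q (n + 1) = f (q n))
    (hF : F = φ.map (algebraMap R A) * (C (q 0) + coeffwise f F)) (m : ℕ) :
    coeff m F = ∑ n ∈ range (m + 1), coeff m (C (q n) * φ.map (algebraMap R A) ^ (n + 1)) := by
  rw [← map_sum, ← sub_eq_zero, ← map_sub]
  exact X_pow_dvd_iff.mp (X_pow_dvd_sub_sum hφ hq hF (m + 1)) m (Nat.lt_succ_self m)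

end FixedPoint

theorem order_eq_one_of_mul_eq_X_mul {R : Type*} [CommRing R] [IsDomain R] {φ u v : R⟦X⟧}
    (hu : IsUnit (constantCoeff u)) (hv : IsUnit (constantCoeff v)) (h : φ * u = X * v) :
    φ.order = 1 := by
  simpa [order_mul, order_zero_of_unit, isUnit_iff_constantCoeff, hu, hv]
    using congrArg order h

section ShiftIntegralExp

open scoped Polynomial

variable {K : Type*} [Field K] [CharZero K]

theorem rescale_exp_eq_mk_div (a : K) :
    rescale a (exp K) = mk fun m => a ^ m / (m.factorial : K) := by
  ext m
  simp [coeff_exp, div_eq_mul_inv]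

theorem rescale_exp_eq_mk_mul_C (a : K[X]) :
    rescale a (exp K[X]) = mk fun m => a ^ m * Polynomial.C (m.factorial : K)⁻¹ := by
  ext m
  simp [coeff_exp, Polynomial.algebraMap_apply]

theorem coeffwise_shiftIntegral_X_mul_exp (c : K) :
    coeffwise (Polynomial.shiftIntegral c) (X * rescale (Polynomial.X - 1) (exp K[X])) =
      (1 + C (Polynomial.C c) * X) * rescale Polynomial.X (exp K[X]) - 1 := by
  rw [add_mul, one_mul, mul_assoc]
  refine PowerSeries.ext fun m => ?_
  rcases m with _ | m
  · simp [coeff_rescale, coeff_exp, coeff_zero_X_mul, -coeff_zero_eq_constantCoeff]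
  · simp only [coeff_coeffwise, coeff_succ_X_mul, rescale_exp_eq_mk_mul_C, coeff_mk, map_sub,
      map_add, coeff_C_mul, Polynomial.shiftIntegral_X_sub_one_pow_mul, coeff_one]
    simp [add_comm]

theorem X_mul_rescale_exp_eq_map_mul (c : K) {φ : K⟦X⟧}
    (hφ : φ * (1 + C c * X) = X * rescale (-1) (exp K)) :
    X * rescale (Polynomial.X - 1) (exp K[X]) = φ.map (algebraMap K K[X]) *
      (C 1 + coeffwise (Polynomial.shiftIntegral c) (X * rescale (Polynomial.X - 1) (exp K[X]))) := by
  have hφ' : φ.map (algebraMap K K[X]) * (1 + C (Polynomial.C c) * X) =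
      X * rescale (-1) (exp K[X]) := by
    simpa [← rescale_map, map_exp] using congrArg (map (algebraMap K K[X])) hφ
  rw [coeffwise_shiftIntegral_X_mul_exp, map_one, add_sub_cancel, ← mul_assoc, hφ', mul_assoc,
    exp_mul_exp_eq_exp_add, neg_add_eq_sub]

end ShiftIntegralExp

end PowerSeries

open PowerSeries

/-- Let `c ∈ ℂ` and `ψ = σ·e^{-σ}·(1+cσ)⁻¹`, a formal power series of order `1` over `ℂ`.
Let `(Q n)ₙ` be the polynomials with `Q 0 = 1` and
`Q (n+1) (x) = c·Q n (x+1) + ∫₀ˣ Q n (y+1) dy`.  Then in `(ℂ[x])⟦σ⟧` one has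
`Σ_{n=0}^∞ Q n (x)·ψ^{n+1} = σ·Σ_{m=0}^∞ (x-1)^m σ^m/m!`; the family on the left is summable
(coefficient-wise the sum is finite) because `ψ^{n+1}` has order `n+1`. -/
theorem sum_Q_psi_eq (c : ℂ) (Q : ℕ → Polynomial ℂ)
    (hQ0 : Q 0 = 1)
    (hQrec : ∀ (n : ℕ) (x : ℝ),
      (Q (n + 1)).eval (x : ℂ) =
        c * (Q n).eval ((x : ℂ) + 1) + ∫ y in (0:ℝ)..x, (Q n).eval ((y : ℂ) + 1))
    (ψ : PowerSeries ℂ)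
    (hψ : ψ = PowerSeries.X * PowerSeries.mk (fun m => (-1) ^ m / (m.factorial : ℂ)) *
        (1 + PowerSeries.C (R := ℂ) c * PowerSeries.X)⁻¹) :
    (∀ n : ℕ, (ψ ^ (n + 1)).order = ((n + 1 : ℕ) : ℕ∞)) ∧
    ∀ m : ℕ,
      (∑ n ∈ Finset.range (m + 1),
        (PowerSeries.coeff (R := Polynomial ℂ) m)
          (PowerSeries.C (R := Polynomial ℂ) (Q n) *
            (PowerSeries.map (Polynomial.C : ℂ →+* Polynomial ℂ) ψ) ^ (n + 1))) =
      (PowerSeries.coeff (R := Polynomial ℂ) m)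
        (PowerSeries.X *
          PowerSeries.mk (fun m =>
            (Polynomial.X - 1 : Polynomial ℂ) ^ m * Polynomial.C ((m.factorial : ℂ))⁻¹)) := by
  have hψX : ψ * (1 + C c * X) = X * mk fun m => (-1) ^ m / (m.factorial : ℂ) := by
    rw [hψ, mul_assoc, PowerSeries.inv_mul_cancel _ (by simp), mul_one]
  have hord : ψ.order = 1 := order_eq_one_of_mul_eq_X_mul (by simp) (by simp) hψX
  refine ⟨fun n => by simp [order_pow, hord], fun m => ?_⟩
  have hX : X ∣ ψ := by simpa [hord] using X_pow_order_dvd (φ := ψ)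
  have hQ (n : ℕ) : Q (n + 1) = Polynomial.shiftIntegral c (Q n) :=
    Polynomial.eq_shiftIntegral_of_forall_eval c (hQrec n)
  rw [← rescale_exp_eq_mk_mul_C, ← Polynomial.algebraMap_eq]
  refine (coeff_eq_sum_of_eq_mul_add_coeffwise hX hQ ?_ m).symm
  rw [hQ0]
  exact X_mul_rescale_exp_eq_map_mul c (rescale_exp_eq_mk_div (-1 : ℂ) ▸ hψX)
end

section
/- Let j ≥ 1 be an integer and let g : ℝ → ℂ be 2j+2 times differentiable. Then for every x ∈ ℝ, Δ_j(g'')(x)·Δ_j(g)(x) − Δ_j(g')(x)² = Δ_{j-1}(g'')(x)·Δ_{j+1}(g)(x). -/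
open Matrix

/-- Key auxiliary identity, valid in any commutative ring but with a spurious `M.det` factor. -/
lemma dj_aux {n : ℕ} {R : Type*} [CommRing R] (M : Matrix (Fin n ⊕ Fin 2) (Fin n ⊕ Fin 2) R) :
    M.det * ((adjugate M).toBlocks₂₂).det = M.det * (M.toBlocks₁₁.det * M.det) := by
  set B := adjugate M with hB
  have hMB : M * B = fromBlocks (M.det • 1) 0 0 (M.det • 1) := by
    rw [hB, mul_adjugate, ← fromBlocks_one, fromBlocks_smul]
    simp
  have hblocks : fromBlocks (M.toBlocks₁₁ * B.toBlocks₁₁ + M.toBlocks₁₂ * B.toBlocks₂₁)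
      (M.toBlocks₁₁ * B.toBlocks₁₂ + M.toBlocks₁₂ * B.toBlocks₂₂)
      (M.toBlocks₂₁ * B.toBlocks₁₁ + M.toBlocks₂₂ * B.toBlocks₂₁)
      (M.toBlocks₂₁ * B.toBlocks₁₂ + M.toBlocks₂₂ * B.toBlocks₂₂)
      = fromBlocks (M.det • 1) 0 0 (M.det • 1) := by
    rw [← fromBlocks_multiply, fromBlocks_toBlocks, fromBlocks_toBlocks, hMB]
  have h12 : M.toBlocks₁₁ * B.toBlocks₁₂ + M.toBlocks₁₂ * B.toBlocks₂₂ = 0 :=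
    (fromBlocks_inj.mp hblocks).2.1
  have h22 : M.toBlocks₂₁ * B.toBlocks₁₂ + M.toBlocks₂₂ * B.toBlocks₂₂ = M.det • 1 :=
    (fromBlocks_inj.mp hblocks).2.2.2
  set D := fromBlocks (1 : Matrix (Fin n) (Fin n) R) B.toBlocks₁₂ 0 B.toBlocks₂₂ with hD
  have hMD : M * D = fromBlocks M.toBlocks₁₁ 0 M.toBlocks₂₁ (M.det • 1) := by
    conv_lhs => rw [← fromBlocks_toBlocks M]
    rw [hD, fromBlocks_multiply]
    simp only [Matrix.mul_one, Matrix.mul_zero, add_zero, h12, h22]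
  have h1 : (M * D).det = M.toBlocks₁₁.det * (M.det * M.det) := by
    rw [hMD, det_fromBlocks_zero₁₂, det_smul, det_one]
    simp [sq]
  have h2 : (M * D).det = M.det * B.toBlocks₂₂.det := by
    rw [det_mul, hD, det_fromBlocks_zero₂₁, det_one, one_mul]
  rw [← h2, h1]; ring

/-- Jacobi-type identity for the bottom-right `2 × 2` block of the adjugate. -/
lemma dj_blocks {n : ℕ} {R : Type*} [CommRing R] (M : Matrix (Fin n ⊕ Fin 2) (Fin n ⊕ Fin 2) R) :
    ((adjugate M).toBlocks₂₂).det = M.toBlocks₁₁.det * M.det := by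
  let A' := mvPolynomialX (Fin n ⊕ Fin 2) (Fin n ⊕ Fin 2) ℤ
  have key : ((adjugate A').toBlocks₂₂).det = A'.toBlocks₁₁.det * A'.det :=
    mul_left_cancel₀ (det_mvPolynomialX_ne_zero _ ℤ) (dj_aux A')
  let f : MvPolynomial ((Fin n ⊕ Fin 2) × (Fin n ⊕ Fin 2)) ℤ →ₐ[ℤ] R :=
    MvPolynomial.aeval fun q => M q.1 q.2
  have hfA : f.mapMatrix A' = M := mvPolynomialX_mapMatrix_aeval ℤ M
  have := congr_arg f key
  rw [_root_.map_mul, AlgHom.map_det, AlgHom.map_det, AlgHom.map_det] at this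
  have hmap11 : (f.mapMatrix A'.toBlocks₁₁ : Matrix (Fin n) (Fin n) R)
      = (f.mapMatrix A').toBlocks₁₁ := rfl
  have hmap22 : (f.mapMatrix (adjugate A').toBlocks₂₂ : Matrix (Fin 2) (Fin 2) R)
      = (f.mapMatrix (adjugate A')).toBlocks₂₂ := rfl
  rw [hmap11, hmap22, AlgHom.map_adjugate, hfA] at this
  exact this

/-- The map sending `inl i` to `i+1` and `inr 0`, `inr 1` to the first and last index. -/
def cornerMap (n : ℕ) : Fin n ⊕ Fin 2 → Fin (n + 2) := fun s =>
  match s with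
  | .inl i => ⟨i.1 + 1, by omega⟩
  | .inr a => if a = 0 then ⟨0, by omega⟩ else ⟨n + 1, by omega⟩

lemma cornerMap_bijective (n : ℕ) : Function.Bijective (cornerMap n) := by
  constructor
  · rintro (i | a) (i' | a') h
    · simp only [cornerMap, Fin.mk.injEq] at h
      exact congrArg Sum.inl (Fin.ext (by omega))
    · exfalso; have := i.isLt
      simp only [cornerMap] at h
      split at h <;> (simp only [Fin.mk.injEq] at h; omega)
    · exfalso; have := i'.isLt
      simp only [cornerMap] at h
      split at h <;> (simp only [Fin.mk.injEq] at h; omega)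
    · fin_cases a <;> fin_cases a' <;> simp_all [cornerMap, Fin.ext_iff]
  · intro k
    rcases eq_or_ne k.1 0 with h0 | h0
    · exact ⟨.inr 0, by simp [cornerMap]; exact (Fin.ext h0.symm)⟩
    rcases eq_or_ne k.1 (n+1) with hl | hl
    · exact ⟨.inr 1, by simp [cornerMap]; exact (Fin.ext hl.symm)⟩
    · have := k.isLt
      exact ⟨.inl ⟨k.1 - 1, by omega⟩, Fin.ext (by simp [cornerMap]; omega)⟩

/-- The Desnanot–Jacobi (Dodgson condensation) identity. -/
lemma desnanot_jacobi {R : Type*} [CommRing R] (n : ℕ)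
    (A : Matrix (Fin (n+2)) (Fin (n+2)) R) :
    (A.submatrix Fin.succ Fin.succ).det * (A.submatrix Fin.castSucc Fin.castSucc).det
      - (A.submatrix Fin.castSucc Fin.succ).det * (A.submatrix Fin.succ Fin.castSucc).det
    = (A.submatrix (fun i : Fin n => i.succ.castSucc) (fun i => i.succ.castSucc)).det * A.det := by
  set e : (Fin n ⊕ Fin 2) ≃ Fin (n + 2) := Equiv.ofBijective _ (cornerMap_bijective n) with he
  set M : Matrix (Fin n ⊕ Fin 2) (Fin n ⊕ Fin 2) R := A.submatrix e e with hM
  have h := dj_blocks M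
  have hdet : M.det = A.det := det_submatrix_equiv_self e A
  have hadj : adjugate M = (adjugate A).submatrix e e := adjugate_submatrix_equiv_self e A
  have h11 : M.toBlocks₁₁ = A.submatrix (fun i : Fin n => i.succ.castSucc) (fun i => i.succ.castSucc) := by
    ext i l
    have h1 : e (.inl i) = i.succ.castSucc := Fin.ext (by simp [he, Equiv.ofBijective, cornerMap])
    have h2 : e (.inl l) = l.succ.castSucc := Fin.ext (by simp [he, Equiv.ofBijective, cornerMap])
    simp [toBlocks₁₁, hM, h1, h2]
  have he0 : e (.inr 0) = (0 : Fin (n+2)) := Fin.ext (by simp [he, Equiv.ofBijective, cornerMap])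
  have he1 : e (.inr 1) = Fin.last (n+1) := Fin.ext (by simp [he, Equiv.ofBijective, cornerMap])
  have h22 : ((adjugate M).toBlocks₂₂).det
      = adjugate A 0 0 * adjugate A (Fin.last (n+1)) (Fin.last (n+1))
        - adjugate A 0 (Fin.last (n+1)) * adjugate A (Fin.last (n+1)) 0 := by
    rw [det_fin_two]
    simp [toBlocks₂₂, hadj, he0, he1]
  rw [h22, h11, hdet] at h
  rw [← h]
  have hsA0 : (0 : Fin (n+2)).succAbove = Fin.succ := Fin.succAbove_zero
  have hsAl : (Fin.last (n+1)).succAbove = Fin.castSucc := Fin.succAbove_last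
  have e00 : adjugate A 0 0 = (A.submatrix Fin.succ Fin.succ).det := by
    rw [adjugate_fin_succ_eq_det_submatrix, hsA0]
    simp
  have ell : adjugate A (Fin.last (n+1)) (Fin.last (n+1))
      = (A.submatrix Fin.castSucc Fin.castSucc).det := by
    rw [adjugate_fin_succ_eq_det_submatrix, hsAl]
    rw [show ((Fin.last (n+1) : Fin (n+2)) + (Fin.last (n+1)) : ℕ) = 2*(n+1) by simp [Fin.val_last]; ring]
    rw [Even.neg_one_pow ⟨n+1, by ring⟩, one_mul]
  have e0l : adjugate A 0 (Fin.last (n+1))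
      = (-1 : R)^(n+1) * (A.submatrix Fin.castSucc Fin.succ).det := by
    rw [adjugate_fin_succ_eq_det_submatrix, hsAl, hsA0]
    norm_num [Fin.val_last]
  have el0 : adjugate A (Fin.last (n+1)) 0
      = (-1 : R)^(n+1) * (A.submatrix Fin.succ Fin.castSucc).det := by
    rw [adjugate_fin_succ_eq_det_submatrix, hsA0, hsAl]
    norm_num [Fin.val_last]
  rw [e00, ell, e0l, el0]
  have hs : ((-1 : R)^(n+1)) * ((-1 : R)^(n+1)) = 1 := by
    rw [← pow_add]; exact Even.neg_one_pow ⟨n+1, by ring⟩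
  rw [show ((-1:R)^(n+1) * (A.submatrix Fin.castSucc Fin.succ).det) *
      ((-1:R)^(n+1) * (A.submatrix Fin.succ Fin.castSucc).det)
      = ((-1:R)^(n+1) * (-1:R)^(n+1)) *
        ((A.submatrix Fin.castSucc Fin.succ).det * (A.submatrix Fin.succ Fin.castSucc).det)
      from by ring, hs, one_mul]

/-- `hankelDeriv p g x` is the determinant of the `(p+1) × (p+1)` Hankel matrix whose
`(i,l)`-entry is the `(i+l)`-th derivative `g^{(i+l)}(x)`; in particular `hankelDeriv 0 g = g`. -/
noncomputable def hankelDeriv (p : ℕ) (g : ℝ → ℂ) (x : ℝ) : ℂ :=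
  (Matrix.of fun i l : Fin (p + 1) => iteratedDeriv (i.1 + l.1) g x).det

/-- For `j ≥ 1` and a `2j+2` times differentiable `g : ℝ → ℂ`, one has
`Δ_j(g'')·Δ_j(g) − Δ_j(g')² = Δ_{j-1}(g'')·Δ_{j+1}(g)`. -/
theorem hankelDeriv_identity_a (j : ℕ) (hj : 1 ≤ j) (g : ℝ → ℂ)
    (hg : ContDiff ℝ (2 * j + 2 : ℕ) g) (x : ℝ) :
    hankelDeriv j (deriv (deriv g)) x * hankelDeriv j g x - (hankelDeriv j (deriv g) x) ^ 2 =
      hankelDeriv (j - 1) (deriv (deriv g)) x * hankelDeriv (j + 1) g x := by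
  obtain ⟨k, rfl⟩ : ∃ k, j = k + 1 := ⟨j - 1, by omega⟩
  have key1 : ∀ (h : ℝ → ℂ) (m : ℕ), iteratedDeriv (m + 1) h = iteratedDeriv m (deriv h) :=
    fun h m => iteratedDeriv_succ'
  set A : Matrix (Fin (k+3)) (Fin (k+3)) ℂ :=
    Matrix.of fun i l : Fin (k+3) => iteratedDeriv (i.1 + l.1) g x with hA
  have h := desnanot_jacobi (k+1) A
  have e1 : hankelDeriv (k+1) (deriv (deriv g)) x = (A.submatrix Fin.succ Fin.succ).det := by
    unfold hankelDeriv
    congr 1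
    ext i l
    simp only [Matrix.of_apply, Matrix.submatrix_apply, hA, Fin.val_succ]
    rw [show i.1 + 1 + (l.1 + 1) = i.1 + l.1 + 1 + 1 by omega, key1, key1]
  have e2 : hankelDeriv (k+1) g x = (A.submatrix Fin.castSucc Fin.castSucc).det := by
    unfold hankelDeriv
    congr 1
  have e3a : hankelDeriv (k+1) (deriv g) x = (A.submatrix Fin.castSucc Fin.succ).det := by
    unfold hankelDeriv
    congr 1
    ext i l
    simp only [Matrix.of_apply, Matrix.submatrix_apply, hA, Fin.coe_castSucc, Fin.val_succ]
    rw [show i.1 + (l.1 + 1) = i.1 + l.1 + 1 by omega, key1]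
  have e3b : hankelDeriv (k+1) (deriv g) x = (A.submatrix Fin.succ Fin.castSucc).det := by
    unfold hankelDeriv
    congr 1
    ext i l
    simp only [Matrix.of_apply, Matrix.submatrix_apply, hA, Fin.coe_castSucc, Fin.val_succ]
    rw [show i.1 + 1 + l.1 = i.1 + l.1 + 1 by omega, key1]
  have e4 : hankelDeriv k (deriv (deriv g)) x
      = (A.submatrix (fun i : Fin (k+1) => i.succ.castSucc) (fun i => i.succ.castSucc)).det := by
    unfold hankelDeriv
    congr 1
    ext i l
    simp only [Matrix.of_apply, Matrix.submatrix_apply, hA, Fin.coe_castSucc, Fin.val_succ]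
    rw [show i.1 + 1 + (l.1 + 1) = i.1 + l.1 + 1 + 1 by omega, key1, key1]
  have e5 : hankelDeriv (k+1+1) g x = A.det := rfl
  have hcross : (hankelDeriv (k+1) (deriv g) x) ^ 2
      = (A.submatrix Fin.castSucc Fin.succ).det * (A.submatrix Fin.succ Fin.castSucc).det := by
    rw [sq]
    nth_rewrite 2 [e3b]
    rw [e3a]
  rw [e1, e2, hcross, h, show k + 1 - 1 = k from rfl, e4, e5]
end

section
/- Let j ≥ 1 be an integer and let g : ℝ → ℂ be 2j+2 times differentiable. Then the functions Δ_j(g) and Δ_{j-1}(g'') are differentiable and for every x ∈ ℝ, Δ_{j-1}(g'')(x)·(Δ_j(g))'(x) − Δ_j(g)(x)·(Δ_{j-1}(g''))'(x) = Δ_{j-1}(g')(x)·Δ_j(g')(x). -/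
namespace Matrix

variable {R : Type*} [CommRing R]

theorem sum_neg_one_pow_mul_det_submatrix_succAbove_eq_zero {n : ℕ}
    (W : Matrix (Fin (n + 2)) (Fin (n + 1)) R) (φ : (Fin (n + 1) → R) →ₗ[R] R) :
    ∑ k : Fin (n + 2), (-1) ^ (k : ℕ) * φ (W k) * (W.submatrix k.succAbove id).det = 0 := by
  let M : Matrix (Fin (n + 2)) (Fin (n + 2)) R := of fun k => Fin.cons (φ (W k)) (W k)
  let c : Fin (n + 2) → R := Fin.cons 0 fun i => φ fun j => if i = j then 1 else 0
  have hcol : (M.updateCol 0 fun k => ∑ i, c i • M k i) = M := by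
    convert M.updateCol_eq_self 0 using 2
    funext k
    simp [M, c, Fin.sum_univ_succ, φ.pi_apply_eq_sum_univ (W k), mul_comm]
  have hM : M.det = 0 := by
    have h := det_updateCol_sum M 0 c
    rwa [hcol, show c 0 = 0 from rfl, zero_smul] at h
  rw [det_succ_column_zero] at hM
  exact hM

def hankel (n : ℕ) (h : ℕ → R) : Matrix (Fin n) (Fin n) R :=
  of fun i l => h (i + l)

def hankelShiftLastRow (n : ℕ) (h : ℕ → R) : Matrix (Fin (n + 1)) (Fin (n + 1)) R :=
  (hankel (n + 1) h).updateRow (Fin.last n) fun l => h (n + 1 + l)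

theorem det_hankel_condensation (m : ℕ) (h : ℕ → R) :
    (hankel (m + 1) fun k => h (k + 2)).det * (hankelShiftLastRow (m + 1) h).det -
        (hankel (m + 2) h).det * (hankelShiftLastRow m fun k => h (k + 2)).det =
      (hankel (m + 1) fun k => h (k + 1)).det * (hankel (m + 2) fun k => h (k + 1)).det := by
  let W : Matrix (Fin (m + 3)) (Fin (m + 2)) R := of fun k l => h (k + l)
  let B := hankel (m + 1) fun k => h (k + 2)
  let φ : (Fin (m + 2) → R) →ₗ[R] R :=
    ((detRowAlternating : (Fin (m + 1) → R) [⋀^Fin (m + 1)]→ₗ[R] R).toMultilinearMap.toLinearMap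
      B (Fin.last m)).comp (LinearMap.funLeft R R Fin.succ)
  have hφ (v : Fin (m + 2) → R) : φ v = (B.updateRow (Fin.last m) (v ∘ Fin.succ)).det := rfl
  have hφ_row (i : Fin m) : φ (W i.castSucc.castSucc.succ) = 0 := by
    rw [hφ]
    convert det_updateRow_eq_zero (M := B) (Fin.castSucc_lt_last i).ne
    funext l
    simp only [W, B, hankel, of_apply, Function.comp_apply, Fin.val_succ, Fin.val_castSucc]
    congr 1
    ring
  have hφ_first : φ (W 0) = (-1) ^ m * (hankel (m + 1) fun k => h (k + 1)).det := by
    have hrot : B.updateRow (Fin.last m) (W 0 ∘ Fin.succ) =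
        (hankel (m + 1) fun k => h (k + 1)).submatrix (finRotate (m + 1)) id := by
      ext i l
      induction i using Fin.lastCases with
      | last => simp [W, hankel]
      | cast i =>
        rw [updateRow_ne (Fin.castSucc_lt_last i).ne]
        simp only [B, hankel, submatrix_apply, of_apply, id,
          coe_finRotate_of_ne_last (Fin.castSucc_lt_last i).ne, Fin.val_castSucc]
        congr 1
        ring
    rw [hφ, hrot, det_permute, sign_finRotate]
    simp
  have hφ_penultimate : φ (W (Fin.last m).castSucc.succ) = B.det := by
    rw [hφ]
    convert congrArg det (B.updateRow_eq_self (Fin.last m))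
    funext l
    simp only [W, B, hankel, of_apply, Function.comp_apply, Fin.val_succ, Fin.val_castSucc,
      Fin.val_last]
    congr 1
    ring
  have hφ_last :
      φ (W (Fin.last (m + 1)).succ) = (hankelShiftLastRow m fun k => h (k + 2)).det := by
    rw [hφ]
    congr 2
    funext l
    simp only [W, Function.comp_apply, Fin.val_succ, of_apply, Fin.val_last]
    congr 1
    ring
  have hW_first :
      W.submatrix (0 : Fin (m + 3)).succAbove id = hankel (m + 2) fun k => h (k + 1) := by
    ext i l
    simp only [W, hankel, submatrix_apply, Fin.succAbove_zero, of_apply, Fin.val_succ, id]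
    congr 1
    ring
  have hW_penultimate :
      W.submatrix (Fin.last m).castSucc.succ.succAbove id = hankelShiftLastRow (m + 1) h := by
    ext i l
    induction i using Fin.lastCases with
    | last => simp [W, hankelShiftLastRow]
    | cast i =>
      rw [hankelShiftLastRow, updateRow_ne (Fin.castSucc_lt_last i).ne]
      simp [W, hankel, Fin.succ_castSucc,
        Fin.succAbove_castSucc_of_lt _ _ (Fin.castSucc_lt_last i)]
  have hW_last : W.submatrix (Fin.last (m + 1)).succ.succAbove id = hankel (m + 2) h := by
    rw [Fin.succ_last, Fin.succAbove_last]
    rfl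
  have hsum := sum_neg_one_pow_mul_det_submatrix_succAbove_eq_zero W φ
  rw [Fin.sum_univ_succ, Fin.sum_univ_castSucc, Fin.sum_univ_castSucc] at hsum
  simp only [hφ_row, mul_zero, zero_mul, Finset.sum_const_zero, zero_add, hφ_first,
    hφ_penultimate, hφ_last, hW_first, hW_penultimate, hW_last, Fin.val_zero, Fin.val_succ,
    Fin.val_castSucc, Fin.val_last] at hsum
  rcases neg_one_pow_eq_or R m with hs | hs <;> simp only [pow_succ, hs, pow_zero] at hsum
  · linear_combination -hsum
  · linear_combination hsum

section Deriv

variable {𝕜 𝔸 : Type*} [NontriviallyNormedField 𝕜] [NormedCommRing 𝔸] [NormedAlgebra 𝕜 𝔸]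

theorem hasDerivAt_det {ι : Type*} [Fintype ι] [DecidableEq ι] {M : 𝕜 → Matrix ι ι 𝔸}
    {M' : Matrix ι ι 𝔸} {x : 𝕜} (hM : ∀ i j, HasDerivAt (fun t => M t i j) (M' i j) x) :
    HasDerivAt (fun t => (M t).det) (∑ i, ((M x).updateRow i (M' i)).det) x := by
  have hprod (σ : Equiv.Perm ι) (i : ι) : ∏ j, (M x).updateRow i (M' i) j (σ j) =
      (∏ j ∈ Finset.univ.erase i, M x j (σ j)) • M' i (σ i) := by
    rw [← Finset.prod_erase_mul _ _ (Finset.mem_univ i), updateRow_self, smul_eq_mul]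
    congr 1
    exact Finset.prod_congr rfl fun j hj => by rw [updateRow_ne (Finset.ne_of_mem_erase hj)]
  have hdet (N : Matrix ι ι 𝔸) :
      N.det = ∑ σ : Equiv.Perm ι, (Equiv.Perm.sign σ : 𝔸) * ∏ j, N j (σ j) := by
    rw [← det_transpose, det_apply']
    rfl
  simp only [hdet, Finset.sum_comm (γ := ι), hprod, ← Finset.mul_sum]
  exact HasDerivAt.fun_sum fun σ _ =>
    (HasDerivAt.fun_finsetProd fun i _ => hM i (σ i)).const_mul _

theorem hasDerivAt_det_hankel {n : ℕ} {u : ℕ → 𝕜 → 𝔸} {x : 𝕜}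
    (hu : ∀ k ≤ 2 * n, HasDerivAt (u k) (u (k + 1) x) x) :
    HasDerivAt (fun t => (hankel (n + 1) fun k => u k t).det)
      (hankelShiftLastRow n fun k => u k x).det x := by
  have h := hasDerivAt_det (M := fun t => hankel (n + 1) fun k => u k t)
    (M' := hankel (n + 1) fun k => u (k + 1) x) fun i l => hu _ (by omega)
  convert h using 1
  rw [Fin.sum_univ_castSucc, Finset.sum_eq_zero fun i _ => ?_, zero_add]
  · rw [hankelShiftLastRow]
    congr 2
    funext l
    simp only [hankel, of_apply, Fin.val_last]
    congr 1
    ring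
  · convert det_updateRow_eq_zero (M := hankel (n + 1) fun k => u k x)
      (Fin.castSucc_lt_succ (i := i)).ne' using 3
    funext l
    simp only [hankel, of_apply, Fin.val_succ, Fin.val_castSucc]
    congr 1
    ring

end Deriv

end Matrix

open Matrix

theorem hankelDeriv_eq_det_hankel (n : ℕ) (f : ℝ → ℂ) (x : ℝ) :
    hankelDeriv n f x = (hankel (n + 1) fun k => iteratedDeriv k f x).det :=
  rfl

theorem hasDerivAt_hankelDeriv {n : ℕ} {f : ℝ → ℂ}
    (hf : ∀ k ≤ 2 * n, Differentiable ℝ (iteratedDeriv k f)) (x : ℝ) :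
    HasDerivAt (hankelDeriv n f) (hankelShiftLastRow n fun k => iteratedDeriv k f x).det x :=
  hasDerivAt_det_hankel (u := fun k => iteratedDeriv k f) fun k hk => by
    rw [iteratedDeriv_succ]
    exact (hf k hk x).hasDerivAt

/-- For `j ≥ 1` and a `2j+2` times differentiable `g : ℝ → ℂ`, the functions `Δ_j(g)` and
`Δ_{j-1}(g'')` are differentiable with
`Δ_{j-1}(g'')·(Δ_j(g))' − Δ_j(g)·(Δ_{j-1}(g''))' = Δ_{j-1}(g')·Δ_j(g')`. -/
theorem hankelDeriv_identity_b (j : ℕ) (hj : 1 ≤ j) (g : ℝ → ℂ)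
    (hg : ContDiff ℝ (2 * j + 2 : ℕ) g) :
    Differentiable ℝ (hankelDeriv j g) ∧
    Differentiable ℝ (hankelDeriv (j - 1) (deriv (deriv g))) ∧
    ∀ x : ℝ,
      hankelDeriv (j - 1) (deriv (deriv g)) x * deriv (hankelDeriv j g) x -
          hankelDeriv j g x * deriv (hankelDeriv (j - 1) (deriv (deriv g))) x =
        hankelDeriv (j - 1) (deriv g) x * hankelDeriv j (deriv g) x := by
  obtain ⟨m, rfl⟩ : ∃ m, j = m + 1 := ⟨j - 1, by omega⟩
  rw [Nat.add_sub_cancel]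
  have hdiff (k : ℕ) (hk : k ≤ 2 * m + 2) : Differentiable ℝ (iteratedDeriv k g) :=
    hg.differentiable_iteratedDeriv k (by exact_mod_cast (by omega : k < 2 * (m + 1) + 2))
  have hg'' (k : ℕ) : iteratedDeriv k (deriv (deriv g)) = iteratedDeriv (k + 2) g := by
    simp only [iteratedDeriv_succ']
  have hA := hasDerivAt_hankelDeriv (n := m + 1) fun k hk => hdiff k (by omega)
  have hB := hasDerivAt_hankelDeriv (n := m) (f := deriv (deriv g)) fun k hk =>
    hg'' k ▸ hdiff (k + 2) (by omega)
  refine ⟨fun x => (hA x).differentiableAt, fun x => (hB x).differentiableAt, fun x => ?_⟩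
  rw [(hA x).deriv, (hB x).deriv]
  simp only [hankelDeriv_eq_det_hankel, hg'', ← iteratedDeriv_succ']
  exact det_hankel_condensation m fun k => iteratedDeriv k g x
end

section
/- Let n ≥ 2 and let a_{ij} ∈ ℂ for 1 ≤ i ≤ n+1 and 1 ≤ j ≤ n, forming an (n+1)×n array A. Then det(A({2,…,n+1},{1,…,n})) · det(A({1,…,n−1},{2,…,n})) = det(A({1,…,n−1,n+1},{1,…,n})) · det(A({2,…,n},{2,…,n})) − det(A({1,…,n},{1,…,n})) · det(A({2,…,n−1,n+1},{2,…,n})). -/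
/-!
Append to `A` the unit column `e_n` (the `1` sits in row `n`). The Desnanot–Jacobi identity for
the resulting square matrix of size `n + 1` is the claimed identity: the minors that keep the new
column are expanded along it, the others are minors of `A`.

Desnanot–Jacobi itself: with `B = adj X`, let `C` be the identity with its first and last rows
replaced by those of `B`. Then `det C` is the corner `2 × 2` minor of `B`, while `C * X` is `X`
with those rows replaced by `det X • e_0` and `det X • e_last`, so `det C * det X` is
`(det X)^2` times the inner minor. The resulting factor `det X` cancels for the generic matrix
over `ℤ[x_ij]`, and specialising gives the identity over any commutative ring.
-/

theorem Pi.single_comp_of_injective {α β M : Type*} [DecidableEq α] [DecidableEq β] [Zero M]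
    {f : α → β} (hf : Function.Injective f) (a : α) (x : M) :
    Pi.single (f a) x ∘ f = Pi.single a x := by
  funext b
  simp [Pi.single_apply, hf.eq_iff]

namespace Matrix

variable {R : Type*} [CommRing R]

theorem det_updateRow_updateRow_one {ι : Type*} [Fintype ι] [DecidableEq ι] {i j : ι}
    (hij : i ≠ j) (u v : ι → R) :
    (((1 : Matrix ι ι R).updateRow i u).updateRow j v).det = u i * v j - u j * v i := by
  -- A rank-two perturbation `1 + E * F` of the identity; Weinstein–Aronszajn turns its
  -- determinant into that of the `2 × 2` matrix `1 + F * E`.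
  let E : Matrix ι (Fin 2) R := of fun k t => if k = ![i, j] t then 1 else 0
  let F : Matrix (Fin 2) ι R := of ![u - (1 : Matrix ι ι R) i, v - (1 : Matrix ι ι R) j]
  have hEF : ((1 : Matrix ι ι R).updateRow i u).updateRow j v = 1 + E * F := by
    ext k l
    simp only [add_apply, mul_apply, Fin.sum_univ_two, E, F, of_apply]
    rcases eq_or_ne k j with rfl | hkj
    · simp [hij.symm, one_apply]
    rcases eq_or_ne k i with rfl | hki
    · simp [hkj, one_apply]
    · simp [hkj, hki]
  have hFE : 1 + F * E = !![u i, u j; v i, v j] := by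
    ext s t
    simp only [add_apply, mul_apply, E, F, of_apply, mul_ite, mul_one, mul_zero,
      Finset.sum_ite_eq', Finset.mem_univ, if_true]
    fin_cases s <;> fin_cases t <;> simp [hij, hij.symm]
  rw [hEF, det_one_add_mul_comm, hFE, det_fin_two_of]

theorem det_updateRow_single_one {n : ℕ} (X : Matrix (Fin (n + 1)) (Fin (n + 1)) R)
    (i : Fin (n + 1)) :
    (X.updateRow i (Pi.single i 1)).det = (X.submatrix i.succAbove i.succAbove).det := by
  rw [det_succ_row _ i, Finset.sum_eq_single i]
  · simp [submatrix_updateRow_succAbove, ← two_mul, pow_mul]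
  · intro j _ hj
    simp [hj]
  · simp

theorem det_updateRow_single_zero_last {n : ℕ} (X : Matrix (Fin (n + 2)) (Fin (n + 2)) R) :
    ((X.updateRow 0 (Pi.single 0 1)).updateRow (Fin.last (n + 1))
        (Pi.single (Fin.last (n + 1)) 1)).det =
      (X.submatrix (fun i : Fin n => i.succ.castSucc) (fun j : Fin n => j.succ.castSucc)).det := by
  have hunit : (X.updateRow (Fin.last (n + 1)) (Pi.single (Fin.last (n + 1)) 1)).submatrix
      Fin.succ Fin.succ =
        (X.submatrix Fin.succ Fin.succ).updateRow (Fin.last n) (Pi.single (Fin.last n) 1) := by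
    ext i j
    simp [updateRow_apply, Pi.single_apply, ← Fin.succ_last]
  rw [updateRow_comm _ Fin.last_pos.ne, det_updateRow_single_one, Fin.succAbove_zero, hunit,
    det_updateRow_single_one, Fin.succAbove_last, submatrix_submatrix]
  rfl

theorem det_mul_desnanot_jacobi {n : ℕ} (X : Matrix (Fin (n + 2)) (Fin (n + 2)) R) :
    X.det * (X.det * (X.submatrix (fun i : Fin n => i.succ.castSucc)
        (fun j : Fin n => j.succ.castSucc)).det) =
      X.det * ((X.submatrix Fin.succ Fin.succ).det * (X.submatrix Fin.castSucc Fin.castSucc).det -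
        (X.submatrix Fin.castSucc Fin.succ).det * (X.submatrix Fin.succ Fin.castSucc).det) := by
  have h0l : (0 : Fin (n + 2)) ≠ Fin.last (n + 1) := Fin.last_pos.ne
  have hrow (i : Fin (n + 2)) : adjugate X i ᵥ* X = X.det • Pi.single i 1 := by
    change (adjugate X * X) i = _
    ext j
    simp [adjugate_mul, one_apply, Pi.single_apply, eq_comm]
  have hCX : ((1 : Matrix (Fin (n + 2)) (Fin (n + 2)) R).updateRow 0 (adjugate X 0)).updateRow
      (Fin.last (n + 1)) (adjugate X (Fin.last (n + 1))) * X =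
        (X.updateRow 0 (X.det • Pi.single 0 1)).updateRow (Fin.last (n + 1))
          (X.det • Pi.single (Fin.last (n + 1)) 1) := by
    simp only [updateRow_mul, Matrix.one_mul, hrow]
  have hdet := congrArg det hCX
  rw [det_mul, det_updateRow_updateRow_one h0l, det_updateRow_smul, updateRow_comm _ h0l,
    det_updateRow_smul, updateRow_comm _ h0l.symm, det_updateRow_single_zero_last] at hdet
  have heven : (-1 : R) ^ (n + 1 + (n + 1)) = 1 := Even.neg_one_pow ⟨_, rfl⟩
  have hsign : (-1 : R) ^ (n + 1) * (-1) ^ (n + 1) = 1 := by rw [← pow_add, heven]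
  simp only [adjugate_fin_succ_eq_det_submatrix, Fin.succAbove_zero, Fin.succAbove_last,
    Fin.val_zero, Fin.val_last, add_zero, zero_add, pow_zero, one_mul, heven] at hdet
  linear_combination -hdet - X.det * (X.submatrix Fin.castSucc Fin.succ).det *
    (X.submatrix Fin.succ Fin.castSucc).det * hsign

theorem desnanot_jacobi {n : ℕ} (X : Matrix (Fin (n + 2)) (Fin (n + 2)) R) :
    X.det * (X.submatrix (fun i : Fin n => i.succ.castSucc)
        (fun j : Fin n => j.succ.castSucc)).det =
      (X.submatrix Fin.succ Fin.succ).det * (X.submatrix Fin.castSucc Fin.castSucc).det -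
        (X.submatrix Fin.castSucc Fin.succ).det * (X.submatrix Fin.succ Fin.castSucc).det := by
  let Y := mvPolynomialX (Fin (n + 2)) (Fin (n + 2)) ℤ
  let f := MvPolynomial.aeval (R := ℤ) fun p : Fin (n + 2) × Fin (n + 2) => X p.1 p.2
  have hYX : Y.map f = X := mvPolynomialX_mapMatrix_aeval ℤ X
  have hY := mul_left_cancel₀ (det_mvPolynomialX_ne_zero _ ℤ) (det_mul_desnanot_jacobi Y)
  simpa only [map_mul, map_sub, AlgHom.map_det, AlgHom.mapMatrix_apply, ← submatrix_map, hYX]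
    using congrArg f hY

section AppendCol

variable {α l m o : Type*} {k : ℕ}

def appendCol (A : Matrix m (Fin k) α) (v : m → α) : Matrix m (Fin (k + 1)) α :=
  of fun i => Fin.snoc (A i) (v i)

theorem submatrix_appendCol_castSucc (A : Matrix m (Fin k) α) (v : m → α) (f : l → m)
    (g : o → Fin k) :
    (appendCol A v).submatrix f (fun j => (g j).castSucc) = A.submatrix f g := by
  ext i j
  simp [appendCol]

theorem submatrix_appendCol_succ (A : Matrix m (Fin (k + 1)) α) (v : m → α) (f : l → m) :
    (appendCol A v).submatrix f Fin.succ = appendCol (A.submatrix f Fin.succ) (v ∘ f) := by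
  ext i j
  induction j using Fin.lastCases with
  | last => simp [appendCol]
  | cast j => simp only [appendCol, submatrix_apply, of_apply, Fin.succ_castSucc, Fin.snoc_castSucc]

end AppendCol

theorem det_appendCol_single {k : ℕ} (A : Matrix (Fin (k + 1)) (Fin k) R) (p : Fin (k + 1)) :
    (appendCol A (Pi.single p 1)).det =
      (-1) ^ ((p : ℕ) + k) * (A.submatrix p.succAbove id).det := by
  rw [det_succ_column _ (Fin.last k), Finset.sum_eq_single p]
  · rw [Fin.succAbove_last, Fin.val_last,
      show (appendCol A (Pi.single p 1)).submatrix p.succAbove Fin.castSucc =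
        A.submatrix p.succAbove id from submatrix_appendCol_castSucc _ _ _ id]
    simp [appendCol]
  · intro i _ hi
    simp [appendCol, hi]
  · simp

theorem det_submatrix_appendCol_single_succ {m : Type*} [DecidableEq m] {k : ℕ}
    (A : Matrix m (Fin (k + 1)) R) {f : Fin (k + 1) → m} (hf : Function.Injective f)
    (p : Fin (k + 1)) :
    ((appendCol A (Pi.single (f p) 1)).submatrix f Fin.succ).det =
      (-1) ^ ((p : ℕ) + k) * (A.submatrix (f ∘ p.succAbove) Fin.succ).det := by
  rw [submatrix_appendCol_succ, Pi.single_comp_of_injective hf, det_appendCol_single,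
    submatrix_submatrix, Function.comp_id]

end Matrix

/-- **Determinant identity for an `(n+1) × n` array** (`n = m + 2 ≥ 2`):
`det A({2,…,n+1},{1,…,n}) · det A({1,…,n−1},{2,…,n})
  = det A({1,…,n−1,n+1},{1,…,n}) · det A({2,…,n},{2,…,n})
    − det A({1,…,n},{1,…,n}) · det A({2,…,n−1,n+1},{2,…,n})`,
where `A(I,J)` denotes the square submatrix keeping the rows in `I` and the columns in `J`,
in increasing order. -/
theorem det_identity_rectangular (m : ℕ) (A : Matrix (Fin (m + 3)) (Fin (m + 2)) ℂ) :
    (A.submatrix (Fin.succ : Fin (m + 2) → Fin (m + 3)) id).det *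
        (A.submatrix (fun i : Fin (m + 1) => i.castSucc.castSucc)
          (Fin.succ : Fin (m + 1) → Fin (m + 2))).det =
      (A.submatrix ((⟨m + 1, by omega⟩ : Fin (m + 3)).succAbove) id).det *
          (A.submatrix (fun i : Fin (m + 1) => i.succ.castSucc)
            (Fin.succ : Fin (m + 1) → Fin (m + 2))).det -
        (A.submatrix (Fin.castSucc : Fin (m + 2) → Fin (m + 3)) id).det *
          (A.submatrix (fun i : Fin (m + 1) => ((⟨m, by omega⟩ : Fin (m + 2)).succAbove i).succ)
            (Fin.succ : Fin (m + 1) → Fin (m + 2))).det := by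
  set M := Matrix.appendCol A (Pi.single ⟨m + 1, by omega⟩ 1)
  have h := Matrix.desnanot_jacobi M
  have hM : M.det = -(A.submatrix ((⟨m + 1, by omega⟩ : Fin (m + 3)).succAbove) id).det := by
    rw [Matrix.det_appendCol_single, Odd.neg_one_pow ⟨m + 1, by simp; ring⟩, neg_one_mul]
  have hinner : M.submatrix (fun i : Fin (m + 1) => i.succ.castSucc) (fun j => j.succ.castSucc) =
      A.submatrix (fun i : Fin (m + 1) => i.succ.castSucc) Fin.succ :=
    Matrix.submatrix_appendCol_castSucc _ _ _ _
  have hss : (M.submatrix Fin.succ Fin.succ).det =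
      -(A.submatrix (fun i : Fin (m + 1) => ((⟨m, by omega⟩ : Fin (m + 2)).succAbove i).succ)
        Fin.succ).det := by
    have := Matrix.det_submatrix_appendCol_single_succ A (Fin.succ_injective _) ⟨m, by omega⟩
    rwa [Fin.val_mk, Odd.neg_one_pow ⟨m, by ring⟩, neg_one_mul] at this
  have hcs : (M.submatrix Fin.castSucc Fin.succ).det =
      (A.submatrix (fun i : Fin (m + 1) => i.castSucc.castSucc) Fin.succ).det := by
    have := Matrix.det_submatrix_appendCol_single_succ A (Fin.castSucc_injective _) (Fin.last _)
    rwa [Fin.val_last, Even.neg_one_pow ⟨m + 1, rfl⟩, one_mul, Fin.succAbove_last] at this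
  have hcc : M.submatrix Fin.castSucc Fin.castSucc = A.submatrix Fin.castSucc id :=
    Matrix.submatrix_appendCol_castSucc _ _ _ id
  have hsc : M.submatrix Fin.succ Fin.castSucc = A.submatrix Fin.succ id :=
    Matrix.submatrix_appendCol_castSucc _ _ _ id
  rw [hM, hinner, hss, hcs, hcc, hsc] at h
  linear_combination h
end

section
/- For every R > 0, the double integral of log|z₁ − z₂| over the disc B(0,R) × B(0,R) equals π²R⁴(log R − 1/4), i.e. ∫_{B(0,R)} ∫_{B(0,R)} log|z₁ − z₂| dz₁ dz₂ = π² R⁴ (log R − 1/4), where B(0,R) ⊂ ℂ is the disc of radius R centered at 0 and the integrals are with respect to the Lebesgue (area) measure on ℂ ≅ ℝ². -/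
/-!
By Jensen's formula, the circle average of `log ‖z - a‖` over `‖z‖ = r` is `log (max r ‖a‖)`.
Integrating in polar coordinates, the inner integral is therefore the radial function
`π (R² (2 log R - 1) + ‖a‖²) / 2` of `a`, and a second polar integration gives the result.
-/

open Real MeasureTheory Metric Set

namespace Complex

variable {E : Type*} [NormedAddCommGroup E] [NormedSpace ℝ E]

theorem integrableOn_polarCoord_target_iff (f : ℂ → E) :
    IntegrableOn (fun p : ℝ × ℝ ↦ p.1 • f (Complex.polarCoord.symm p)) polarCoord.target ↔
      Integrable f := by
  rw [← (volume_preserving_equiv_real_prod.symm).integrable_comp_emb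
      measurableEquivRealProd.symm.measurableEmbedding,
    ← integrableOn_univ, ← integrableOn_congr_set_ae polarCoord_source_ae_eq_univ,
    ← polarCoord.symm_image_target_eq_source,
    integrableOn_image_iff_integrableOn_abs_det_fderiv_smul volume
      polarCoord.open_target.measurableSet
      (fun p _ ↦ (hasFDerivAt_polarCoord_symm p).hasFDerivWithinAt) polarCoord.symm.injOn]
  refine integrableOn_congr_fun (fun p hp ↦ ?_) polarCoord.open_target.measurableSet
  rw [det_fderivPolarCoordSymm, abs_of_pos hp.1]
  rfl

theorem integral_Ioo_polarCoord_symm_eq_circleAverage (f : ℂ → E) (r : ℝ) :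
    ∫ θ in Ioo (-π) π, f (Complex.polarCoord.symm (r, θ)) = (2 * π) • circleAverage f 0 r := by
  have hcircle : ∀ θ : ℝ, Complex.polarCoord.symm (r, θ) = circleMap 0 r θ := by
    intro θ
    simp [circleMap, exp_mul_I]
  rw [circleAverage_eq_integral_add (-π), smul_inv_smul₀ (by positivity),
    intervalIntegral.integral_comp_add_right (fun θ ↦ f (circleMap 0 r θ)), zero_add,
    show 2 * π + -π = π by ring, intervalIntegral.integral_of_le (by linarith [pi_pos]),
    ← integral_Ioc_eq_integral_Ioo]
  simp only [hcircle]

theorem integral_eq_two_pi_smul_integral_Ioi_circleAverage {f : ℂ → E} (hf : Integrable f) :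
    ∫ z, f z = (2 * π) • ∫ r in Ioi 0, r • circleAverage f 0 r := by
  rw [← Complex.integral_comp_polarCoord_symm, polarCoord_target, Measure.volume_eq_prod,
    setIntegral_prod _ ((integrableOn_polarCoord_target_iff f).2 hf)]
  simp only [integral_smul, integral_Ioo_polarCoord_symm_eq_circleAverage, smul_comm _ (2 * π)]

theorem setIntegral_ball_zero_eq_two_pi_smul_integral_circleAverage [CompleteSpace E]
    {f : ℂ → E} {R : ℝ} (hR : 0 ≤ R) (hf : IntegrableOn f (ball 0 R)) :
    ∫ z in ball 0 R, f z = (2 * π) • ∫ r in 0..R, r • circleAverage f 0 r := by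
  rw [← integral_indicator measurableSet_ball,
    integral_eq_two_pi_smul_integral_Ioi_circleAverage (hf.integrable_indicator measurableSet_ball),
    intervalIntegral.integral_of_le hR, integral_Ioc_eq_integral_Ioo,
    setIntegral_eq_of_subset_of_forall_sdiff_eq_zero measurableSet_Ioi Ioo_subset_Ioi_self]
  · congr 1
    refine setIntegral_congr_fun measurableSet_Ioo fun r hr ↦ ?_
    rw [circleAverage_congr_sphere fun z hz ↦ indicator_of_mem ?_ f]
    rw [mem_sphere_zero_iff_norm, abs_of_pos hr.1] at hz
    rw [mem_ball_zero_iff, hz]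
    exact hr.2
  · rintro r ⟨hr₀, hr⟩
    rw [circleAverage_const_on_circle fun z hz ↦ indicator_of_notMem ?_ f, smul_zero]
    rw [mem_sphere_zero_iff_norm] at hz
    rw [mem_ball_zero_iff, hz, abs_of_pos hr₀, not_lt]
    exact le_of_not_gt fun h ↦ hr ⟨hr₀, h⟩

theorem setIntegral_ball_zero_norm_eq [CompleteSpace E] {g : ℝ → E} (hg : Continuous g) {R : ℝ}
    (hR : 0 ≤ R) :
    ∫ z in ball (0 : ℂ) R, g ‖z‖ = (2 * π) • ∫ r in 0..R, r • g r := by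
  have hint : IntegrableOn (fun z : ℂ ↦ g ‖z‖) (ball 0 R) :=
    ((hg.comp continuous_norm).continuousOn.integrableOn_compact
      (isCompact_closedBall 0 R)).mono_set ball_subset_closedBall
  rw [setIntegral_ball_zero_eq_two_pi_smul_integral_circleAverage hR hint]
  congr 1
  refine intervalIntegral.integral_congr fun r hr ↦ ?_
  rw [uIcc_of_le hR] at hr
  rw [circleAverage_const_on_circle fun z hz ↦ ?_]
  rw [mem_sphere_zero_iff_norm, abs_of_nonneg hr.1] at hz
  rw [hz]

end Complex

theorem circleAverage_log_norm_sub_const_eq_log_max (a : ℂ) (r : ℝ) :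
    circleAverage (log ‖· - a‖) 0 r = log (max |r| ‖a‖) := by
  rw [← circleAverage_abs_radius]
  rcases (abs_nonneg r).eq_or_lt with hr | hr
  · simp [← hr]
  · rw [circleAverage_log_norm_sub_const_eq_log_radius_add_posLog hr.ne', zero_sub, norm_neg,
      posLog_eq_log_max_one (by positivity), ← log_mul hr.ne' (by positivity),
      mul_max_of_nonneg _ _ hr.le, mul_one, mul_inv_cancel_left₀ hr.ne']

theorem Real.abs_log_le_mul_inv_of_lt {x r : ℝ} (hx : 0 ≤ x) (hxr : x < r) :
    |log x| ≤ (1 + r ^ 2) * x⁻¹ := by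
  rcases hx.eq_or_lt with rfl | hx
  · simp
  rcases le_or_gt x 1 with hx₁ | hx₁
  · have h := abs_log_mul_self_lt x hx hx₁
    rw [abs_mul, abs_of_pos hx, ← lt_div_iff₀ hx, one_div] at h
    nlinarith [inv_pos.2 hx]
  · have hlog : log x < x := (log_le_sub_one_of_pos hx).trans_lt (by linarith)
    rw [abs_of_pos (log_pos hx₁), le_mul_inv_iff₀ hx]
    nlinarith

theorem integrableOn_log_norm_ball_zero (r : ℝ) :
    IntegrableOn (fun z : ℂ ↦ log ‖z‖) (ball 0 r) := by
  refine integrableOn_ball_of_norm_le_rpow (C := 1 + r ^ 2) (α := 1) (by simp) (by simp) ?_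
    (continuous_norm.measurable.log).aestronglyMeasurable
  refine (ae_restrict_iff' measurableSet_ball).2 (Filter.Eventually.of_forall fun z hz ↦ ?_)
  rw [rpow_neg_one, norm_eq_abs]
  exact abs_log_le_mul_inv_of_lt (norm_nonneg z) (mem_ball_zero_iff.1 hz)

theorem integrableOn_log_norm_sub_ball_zero (a : ℂ) (R : ℝ) :
    IntegrableOn (fun z : ℂ ↦ log ‖z - a‖) (ball 0 R) := by
  have h := ((measurePreserving_sub_right volume a).integrableOn_comp_preimage
    (measurableEmbedding_subRight a)).2 (integrableOn_log_norm_ball_zero (R + ‖a‖))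
  refine h.mono_set fun z hz ↦ ?_
  rw [mem_preimage, mem_ball_zero_iff]
  rw [mem_ball_zero_iff] at hz
  linarith [norm_sub_le z a]

theorem intervalIntegral.integral_mul_log_of_nonneg {a b : ℝ} (ha : 0 ≤ a) (hab : a ≤ b) :
    ∫ x in a..b, x * log x = b ^ 2 * (2 * log b - 1) / 4 - a ^ 2 * (2 * log a - 1) / 4 := by
  have hcont : Continuous fun x : ℝ ↦ x ^ 2 * (2 * log x - 1) / 4 := by
    have h : (fun x : ℝ ↦ x ^ 2 * (2 * log x - 1) / 4) =
        fun x ↦ (2 * (x * (x * log x)) - x ^ 2) / 4 := by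
      funext x
      ring
    rw [h]
    exact ((continuous_const.mul (continuous_id.mul continuous_mul_log)).sub
      (continuous_pow 2)).div_const 4
  refine integral_eq_sub_of_hasDerivAt_of_le hab hcont.continuousOn (fun x hx ↦ ?_)
    (continuous_mul_log.intervalIntegrable a b)
  have hx : x ≠ 0 := (ha.trans_lt hx.1).ne'
  refine (((hasDerivAt_pow 2 x).mul
    (((hasDerivAt_log hx).const_mul 2).sub_const 1)).div_const 4).congr_deriv ?_
  field_simp
  ring

theorem intervalIntegral.integral_mul_log_max {s R : ℝ} (hs : 0 ≤ s) (hsR : s ≤ R) :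
    ∫ r in 0..R, r * log (max r s) = (R ^ 2 * (2 * log R - 1) + s ^ 2) / 4 := by
  have h₁ : EqOn (fun r ↦ r * log (max r s)) (fun r ↦ log s * r) (uIcc 0 s) := by
    intro r hr
    rw [uIcc_of_le hs] at hr
    simp only [max_eq_right hr.2, mul_comm]
  have h₂ : EqOn (fun r ↦ r * log (max r s)) (fun r ↦ r * log r) (uIcc s R) := by
    intro r hr
    rw [uIcc_of_le hsR] at hr
    simp only [max_eq_left hr.1]
  rw [← integral_add_adjacent_intervals
      ((continuous_const.mul continuous_id).continuousOn.congr h₁).intervalIntegrable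
      (continuous_mul_log.continuousOn.congr h₂).intervalIntegrable,
    integral_congr h₁, integral_congr h₂, integral_const_mul, integral_id,
    integral_mul_log_of_nonneg hs hsR]
  ring

theorem setIntegral_ball_zero_log_norm_sub {R : ℝ} {a : ℂ} (ha : a ∈ ball 0 R) :
    ∫ z in ball 0 R, log ‖a - z‖ = π * (R ^ 2 * (2 * log R - 1) + ‖a‖ ^ 2) / 2 := by
  have hR : 0 ≤ R := (norm_nonneg a).trans (mem_ball_zero_iff.1 ha).le
  simp_rw [norm_sub_rev a]
  rw [Complex.setIntegral_ball_zero_eq_two_pi_smul_integral_circleAverage hR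
      (integrableOn_log_norm_sub_ball_zero a R)]
  have hcircle : EqOn (fun r ↦ r • circleAverage (log ‖· - a‖) 0 r)
      (fun r ↦ r * log (max r ‖a‖)) (uIcc 0 R) := by
    intro r hr
    rw [uIcc_of_le hR] at hr
    simp only [circleAverage_log_norm_sub_const_eq_log_max, abs_of_nonneg hr.1, smul_eq_mul]
  rw [intervalIntegral.integral_congr hcircle,
    intervalIntegral.integral_mul_log_max (norm_nonneg a) (mem_ball_zero_iff.1 ha).le,
    smul_eq_mul]
  ring

open Complex in
/-- For every `R > 0`,
`∫_{B(0,R)} ∫_{B(0,R)} log|z₁ − z₂| dz₁ dz₂ = π² R⁴ (log R − 1/4)`,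
with respect to the Lebesgue (area) measure on `ℂ ≃ ℝ²`. -/
theorem integral_log_dist_ball (R : ℝ) (hR : 0 < R) :
    ∫ z₁ in Metric.ball (0 : ℂ) R, ∫ z₂ in Metric.ball (0 : ℂ) R,
        Real.log ‖z₁ - z₂‖ =
      Real.pi ^ 2 * R ^ 4 * (Real.log R - 1 / 4) := by
  rw [setIntegral_congr_fun measurableSet_ball fun z hz ↦ setIntegral_ball_zero_log_norm_sub hz,
    Complex.setIntegral_ball_zero_norm_eq
      (g := fun s ↦ π * (R ^ 2 * (2 * Real.log R - 1) + s ^ 2) / 2) (by fun_prop) hR.le]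
  set c := R ^ 2 * (2 * Real.log R - 1)
  have hpoly : (fun r ↦ r • (π * (c + r ^ 2) / 2)) = fun r ↦ π * c / 2 * r + π / 2 * r ^ 3 := by
    funext r
    rw [smul_eq_mul]
    ring
  rw [hpoly, intervalIntegral.integral_add
      ((by fun_prop : Continuous fun r : ℝ ↦ π * c / 2 * r).intervalIntegrable _ _)
      ((by fun_prop : Continuous fun r : ℝ ↦ π / 2 * r ^ 3).intervalIntegrable _ _),
    intervalIntegral.integral_const_mul, intervalIntegral.integral_const_mul, integral_id,
    integral_pow, smul_eq_mul]
  ring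
end

section
/- Let ε > 0 and set d = (log(1 + 1/ε))^{-1/2}. Then there do not exist c > 0 and δ with 0 < δ < min(d^{-2}, log(1 + 1/ε)) such that (e^s − 1)/(1 + ε − ε·e^s) = (1/c²)·((1 − d² s)^{-c²/d²} − 1) for all s ∈ (0, δ), where (1 − d²s)^{-c²/d²} denotes the real power exp(−(c²/d²)·log(1 − d²s)). -/
/-!
Differentiating the identity once and eliminating the power via the identity itself gives
`eˢ (1 - d² s) = w (w + c² (eˢ - 1))` with `w = 1 + ε - ε eˢ`. After division by `eˢ` this says that
`d² s` agrees on an interval with a combination of `e⁻ˢ`, `1` and `eˢ`; such a combination `φ`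
satisfies `φ''' = φ'`, whereas `(d² s)' = d² ≠ 0 = (d² s)'''`.
-/

open Real Set

theorem deriv_mul_exp_neg_add_mul_exp (a c : ℝ) :
    deriv (fun s => a * exp (-s) + c * exp s) = fun s => -a * exp (-s) + c * exp s := by
  funext s
  refine HasDerivAt.deriv ?_
  refine ((((hasDerivAt_neg s).exp).const_mul a).add ((hasDerivAt_exp s).const_mul c)).congr_deriv ?_
  ring

theorem slope_eq_zero_of_eqOn_exp_neg_add_exp {U : Set ℝ} (hU : IsOpen U) (hne : U.Nonempty)
    {m b a c : ℝ} (h : EqOn (fun s => m * s + b) (fun s => a * exp (-s) + c * exp s) U) :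
    m = 0 := by
  obtain ⟨x, hx⟩ := hne
  have h₁ := h.deriv hU
  have h₃ := (h₁.deriv hU).deriv hU
  have hline : deriv (fun s => m * s + b) = fun _ => m := by
    funext s
    exact ((hasDerivAt_id s).const_mul m |>.add_const b).deriv.trans (mul_one m)
  simp only [hline, deriv_const', deriv_mul_exp_neg_add_mul_exp, neg_neg] at h₁ h₃
  linarith [h₁ hx, h₃ hx]

theorem eq_zero_of_exp_mul_one_sub_eq {U : Set ℝ} (hU : IsOpen U) (hne : U.Nonempty)
    {ε c D : ℝ} (h : ∀ s ∈ U, exp s * (1 - D * s) =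
      (1 + ε - ε * exp s) * (1 + ε - ε * exp s + c ^ 2 * (exp s - 1))) :
    D = 0 := by
  refine slope_eq_zero_of_eqOn_exp_neg_add_exp hU hne
    (b := (1 + ε) * (c ^ 2 - ε) - ε * (1 + ε - c ^ 2) - 1)
    (a := -((1 + ε) * (1 + ε - c ^ 2))) (c := ε * (c ^ 2 - ε)) fun s hs => ?_
  have hinv : exp (-s) * exp s = 1 := by rw [← exp_add, neg_add_cancel, exp_zero]
  linear_combination (-exp (-s)) * h s hs +
    (1 - D * s - ((1 + ε) * (c ^ 2 - ε) - ε * (1 + ε - c ^ 2)) + ε * (c ^ 2 - ε) * exp s) * hinv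

theorem exp_mul_one_sub_eq_of_eqOn {U : Set ℝ} (hU : IsOpen U) {ε c D : ℝ} (hc : c ≠ 0)
    (hD : D ≠ 0) (hw : ∀ s ∈ U, 1 + ε - ε * exp s ≠ 0) (hz : ∀ s ∈ U, 1 - D * s ≠ 0)
    (h : EqOn (fun s => (exp s - 1) / (1 + ε - ε * exp s))
      (fun s => 1 / c ^ 2 * (exp (-(c ^ 2 / D) * log (1 - D * s)) - 1)) U) :
    ∀ s ∈ U, exp s * (1 - D * s) =
      (1 + ε - ε * exp s) * (1 + ε - ε * exp s + c ^ 2 * (exp s - 1)) := by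
  intro s hs
  have hlhs : HasDerivAt (fun s => (exp s - 1) / (1 + ε - ε * exp s))
      (exp s / (1 + ε - ε * exp s) ^ 2) s := by
    refine (((hasDerivAt_exp s).sub_const 1).div
      (((hasDerivAt_exp s).const_mul ε).const_sub (1 + ε)) (hw s hs)).congr_deriv ?_
    ring
  have hrhs : HasDerivAt (fun s => 1 / c ^ 2 * (exp (-(c ^ 2 / D) * log (1 - D * s)) - 1))
      (exp (-(c ^ 2 / D) * log (1 - D * s)) / (1 - D * s)) s := by
    have hlog := (((hasDerivAt_id' s).const_mul D).const_sub 1).log (hz s hs)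
    refine (((hlog.const_mul (-(c ^ 2 / D))).exp.sub_const 1).const_mul (1 / c ^ 2)).congr_deriv ?_
    field_simp
  have hderiv := (hlhs.congr_of_eventuallyEq
    (Filter.eventuallyEq_of_mem (hU.mem_nhds hs) h.symm)).unique hrhs
  have hval : (exp s - 1) / (1 + ε - ε * exp s) =
      1 / c ^ 2 * (exp (-(c ^ 2 / D) * log (1 - D * s)) - 1) := h hs
  rw [div_eq_div_iff (pow_ne_zero 2 (hw s hs)) (hz s hs)] at hderiv
  rw [div_eq_iff (hw s hs)] at hval
  set w := 1 + ε - ε * exp s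
  set y := exp (-(c ^ 2 / D) * log (1 - D * s))
  have hvalue : c ^ 2 * (exp s - 1) = (y - 1) * w := by
    rw [hval]
    field_simp
  linear_combination hderiv - w * hvalue

/-- Let `ε > 0` and `d = (log(1 + 1/ε))^{-1/2}`.  Then there are no `c > 0` and
`0 < δ < min (d⁻², log(1 + 1/ε))` such that
`(e^s − 1)/(1 + ε − ε·e^s) = (1/c²)·((1 − d²s)^{-c²/d²} − 1)` for all `s ∈ (0, δ)`,
where `(1 − d²s)^{-c²/d²} = exp(−(c²/d²)·log(1 − d²s))`.
(This is the analytic core of the fact that `T + √ε Y` is not a DT-operator.) -/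
theorem not_DT_operator_identity (ε : ℝ) (hε : 0 < ε)
    (d : ℝ) (hd : d = (Real.log (1 + 1 / ε)) ^ (-(1 / 2 : ℝ))) :
    ¬ ∃ c : ℝ, 0 < c ∧ ∃ δ : ℝ, 0 < δ ∧ δ < min (1 / d ^ 2) (Real.log (1 + 1 / ε)) ∧
        ∀ s : ℝ, s ∈ Set.Ioo 0 δ →
          (Real.exp s - 1) / (1 + ε - ε * Real.exp s) =
            (1 / c ^ 2) *
              (Real.exp (-(c ^ 2 / d ^ 2) * Real.log (1 - d ^ 2 * s)) - 1) := by
  rintro ⟨c, hc, δ, hδ, hδlt, heq⟩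
  obtain ⟨hδd, hδL⟩ := lt_min_iff.mp hδlt
  have hL : 0 < log (1 + 1 / ε) := log_pos (by simp [hε])
  have hD : 0 < d ^ 2 := by
    rw [hd, ← rpow_natCast, ← rpow_mul hL.le]
    positivity
  have hw : ∀ s ∈ Ioo 0 δ, 1 + ε - ε * exp s ≠ 0 := fun s hs => by
    have hexp : exp s < 1 + 1 / ε := by
      rw [← exp_log (by positivity : (0 : ℝ) < 1 + 1 / ε)]
      exact exp_lt_exp.mpr (hs.2.trans hδL)
    have : ε * exp s < ε + 1 := by
      calc ε * exp s < ε * (1 + 1 / ε) := mul_lt_mul_of_pos_left hexp hε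
        _ = ε + 1 := by field_simp
    linarith
  have hz : ∀ s ∈ Ioo 0 δ, 1 - d ^ 2 * s ≠ 0 := fun s hs => by
    have hδD := (lt_div_iff₀ hD).mp (hs.2.trans hδd)
    nlinarith [hs.1]
  exact hD.ne' <| eq_zero_of_exp_mul_one_sub_eq isOpen_Ioo (nonempty_Ioo.mpr hδ) <|
    exp_mul_one_sub_eq_of_eqOn isOpen_Ioo hc.ne' hD.ne' hw hz heq
end

section
/- Let a > b > 0 be real numbers and let (F_n)_{n≥0} be the sequence of continuous functions on [0,1] defined by F₀(x) = 1 and F_n = a·L*(F_{n-1}) + b·L(F_{n-1}) for n ≥ 1. Then there exists t₀ > 0 such that for all real t with |t| < t₀ and all x ∈ [0,1], the series Σ_{n=0}^∞ F_n(x)·tⁿ converges absolutely and Σ_{n=0}^∞ F_n(x)·tⁿ = (a−b)·e^{(a−b)tx} / (a − b·e^{(a−b)t}). -/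
/-! The operator `K = twoSidedIntegral a b = a L* + b L` satisfies `|K f| ≤ a · sup |f|` on
`[0,1]` because `0 ≤ b ≤ a`. Hence `|F n| ≤ aⁿ`, and for `|t| < 1/a` the series
`g = Σ F n tⁿ` converges uniformly on `[0,1]` and, by the recursion, solves `g = 1 + t K g`.
The exponential on the right-hand side solves the same equation (integrate directly; this needs
`a ≠ b e^{(a-b)t}`, which holds for `(a-b)t < log (a/b)`), and `f ↦ 1 + t K f` is a
contraction in the sup norm, so the two agree. -/

open MeasureTheory Set intervalIntegral

noncomputable def twoSidedIntegral (a b : ℝ) (f : ℝ → ℝ) (x : ℝ) : ℝ :=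
  a * (∫ t in (0:ℝ)..x, f t) + b * ∫ t in x..(1:ℝ), f t

theorem abs_twoSidedIntegral_le {a b M : ℝ} {f : ℝ → ℝ} (hb : 0 ≤ b) (hab : b ≤ a)
    (hf : ∀ u ∈ Icc (0:ℝ) 1, |f u| ≤ M) {x : ℝ} (hx : x ∈ Icc (0:ℝ) 1) :
    |twoSidedIntegral a b f x| ≤ a * M := by
  have hM : 0 ≤ M := (abs_nonneg _).trans (hf x hx)
  have hleft : |∫ t in (0:ℝ)..x, f t| ≤ M * x := by
    simpa [abs_of_nonneg hx.1] using norm_integral_le_of_norm_le_const (a := 0) (b := x)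
      fun u hu => (Real.norm_eq_abs _).trans_le <| hf u <|
        uIcc_subset_Icc (left_mem_Icc.2 zero_le_one) hx (uIoc_subset_uIcc hu)
  have hright : |∫ t in x..(1:ℝ), f t| ≤ M * (1 - x) := by
    simpa [abs_of_nonneg (sub_nonneg.2 hx.2)] using norm_integral_le_of_norm_le_const
      (a := x) (b := 1) fun u hu => (Real.norm_eq_abs _).trans_le <| hf u <|
        uIcc_subset_Icc hx (right_mem_Icc.2 zero_le_one) (uIoc_subset_uIcc hu)
  calc |twoSidedIntegral a b f x|
      ≤ a * |∫ t in (0:ℝ)..x, f t| + b * |∫ t in x..(1:ℝ), f t| := by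
        unfold twoSidedIntegral
        refine (abs_add_le _ _).trans_eq ?_
        rw [abs_mul, abs_mul, abs_of_nonneg hb, abs_of_nonneg (hb.trans hab)]
    _ ≤ a * (M * x) + b * (M * (1 - x)) := by gcongr; linarith
    _ ≤ a * M := by nlinarith [mul_nonneg (mul_nonneg (sub_nonneg.2 hab) hM) (sub_nonneg.2 hx.2)]

theorem twoSidedIntegral_mul_const (a b c : ℝ) (f : ℝ → ℝ) (x : ℝ) :
    twoSidedIntegral a b (fun u => f u * c) x = twoSidedIntegral a b f x * c := by
  simp only [twoSidedIntegral, intervalIntegral.integral_mul_const]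
  ring

theorem twoSidedIntegral_sub {a b : ℝ} {f g : ℝ → ℝ} (hf : ContinuousOn f (Icc 0 1))
    (hg : ContinuousOn g (Icc 0 1)) {x : ℝ} (hx : x ∈ Icc (0:ℝ) 1) :
    twoSidedIntegral a b (f - g) x = twoSidedIntegral a b f x - twoSidedIntegral a b g x := by
  have hl := uIcc_subset_Icc (left_mem_Icc.2 zero_le_one) hx
  have hr := uIcc_subset_Icc hx (right_mem_Icc.2 zero_le_one)
  simp only [twoSidedIntegral, Pi.sub_apply,
    integral_sub (hf.mono hl).intervalIntegrable (hg.mono hl).intervalIntegrable,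
    integral_sub (hf.mono hr).intervalIntegrable (hg.mono hr).intervalIntegrable]
  ring

theorem hasSum_twoSidedIntegral (a b : ℝ) {f : ℕ → ℝ → ℝ} {M : ℕ → ℝ}
    (hf : ∀ n, ContinuousOn (f n) (Icc 0 1)) (hM : Summable M)
    (hfM : ∀ n, ∀ u ∈ Icc (0:ℝ) 1, |f n u| ≤ M n) {x : ℝ} (hx : x ∈ Icc (0:ℝ) 1) :
    HasSum (fun n => twoSidedIntegral a b (f n) x)
      (twoSidedIntegral a b (fun u => ∑' n, f n u) x) := by
  have hasSum_integral : ∀ {p q : ℝ}, uIcc p q ⊆ Icc 0 1 →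
      HasSum (fun n => ∫ u in p..q, f n u) (∫ u in p..q, ∑' n, f n u) := fun hpq =>
    hasSum_integral_of_dominated_convergence (fun n _ => M n)
      (fun n => ((hf n).mono hpq).intervalIntegrable.def'.aestronglyMeasurable)
      (fun n => ae_of_all _ fun u hu =>
        (Real.norm_eq_abs _).trans_le (hfM n u (hpq (uIoc_subset_uIcc hu))))
      (ae_of_all _ fun _ _ => hM) intervalIntegrable_const
      (ae_of_all _ fun u hu => (hM.of_norm_bounded fun n =>
        (Real.norm_eq_abs _).trans_le (hfM n u (hpq (uIoc_subset_uIcc hu)))).hasSum)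
  exact ((hasSum_integral (uIcc_subset_Icc (left_mem_Icc.2 zero_le_one) hx)).mul_left a).add
    ((hasSum_integral (uIcc_subset_Icc hx (right_mem_Icc.2 zero_le_one))).mul_left b)

theorem eqOn_zero_of_eq_smul_twoSidedIntegral {a b t : ℝ} {d : ℝ → ℝ} (hb : 0 ≤ b)
    (hab : b ≤ a) (hta : |t| * a < 1) (hd : ContinuousOn d (Icc 0 1))
    (hfix : ∀ x ∈ Icc (0:ℝ) 1, d x = t * twoSidedIntegral a b d x) :
    EqOn d 0 (Icc 0 1) := by
  obtain ⟨x₀, hx₀, hmax⟩ := isCompact_Icc.exists_isMaxOn (nonempty_Icc.2 zero_le_one)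
    (continuous_abs.comp_continuousOn hd)
  have hbound : ∀ u ∈ Icc (0:ℝ) 1, |d u| ≤ |d x₀| := fun u hu => hmax hu
  have hcontract : |d x₀| ≤ |t| * a * |d x₀| := by
    calc |d x₀| = |t| * |twoSidedIntegral a b d x₀| := by rw [hfix x₀ hx₀, abs_mul]
      _ ≤ |t| * (a * |d x₀|) := by gcongr; exact abs_twoSidedIntegral_le hb hab hbound hx₀
      _ = |t| * a * |d x₀| := by ring
  have hmax_zero : |d x₀| = 0 := by nlinarith [abs_nonneg (d x₀), abs_nonneg t]
  intro x hx
  simpa [hmax_zero] using hbound x hx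

theorem eqOn_of_eq_add_smul_twoSidedIntegral {a b c t : ℝ} {g h : ℝ → ℝ} (hb : 0 ≤ b)
    (hab : b ≤ a) (hta : |t| * a < 1) (hg : ContinuousOn g (Icc 0 1))
    (hh : ContinuousOn h (Icc 0 1))
    (hgfix : ∀ x ∈ Icc (0:ℝ) 1, g x = c + t * twoSidedIntegral a b g x)
    (hhfix : ∀ x ∈ Icc (0:ℝ) 1, h x = c + t * twoSidedIntegral a b h x) :
    EqOn g h (Icc 0 1) := by
  have hzero := eqOn_zero_of_eq_smul_twoSidedIntegral hb hab hta (hg.sub hh) fun x hx => by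
    rw [twoSidedIntegral_sub hg hh hx, Pi.sub_apply, hgfix x hx, hhfix x hx]
    ring
  exact fun x hx => sub_eq_zero.1 (hzero hx)

theorem integral_mul_exp_mul (k p q : ℝ) :
    ∫ u in p..q, k * Real.exp (k * u) = Real.exp (k * q) - Real.exp (k * p) :=
  integral_eq_sub_of_hasDerivAt
    (fun u _ => by simpa [mul_comm] using ((hasDerivAt_id u).const_mul k).exp)
    ((by fun_prop : Continuous fun u => k * Real.exp (k * u)).intervalIntegrable p q)

theorem exp_eq_one_add_smul_twoSidedIntegral {a b t : ℝ}
    (hD : a - b * Real.exp ((a - b) * t) ≠ 0) (x : ℝ) :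
    (a - b) * Real.exp ((a - b) * t * x) / (a - b * Real.exp ((a - b) * t)) =
      1 + t * twoSidedIntegral a b
        (fun u => (a - b) * Real.exp ((a - b) * t * u) / (a - b * Real.exp ((a - b) * t))) x := by
  have hint : ∀ p q : ℝ, t * ∫ u in p..q,
      (a - b) * Real.exp ((a - b) * t * u) / (a - b * Real.exp ((a - b) * t)) =
        (Real.exp ((a - b) * t * q) - Real.exp ((a - b) * t * p)) /
          (a - b * Real.exp ((a - b) * t)) := by
    intro p q
    rw [← intervalIntegral.integral_const_mul, ← integral_mul_exp_mul,
      ← intervalIntegral.integral_div]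
    congr 1 with u
    ring
  rw [twoSidedIntegral, mul_add, mul_left_comm t a, mul_left_comm t b, hint, hint,
    mul_zero, Real.exp_zero, mul_one]
  field_simp
  ring

theorem abs_le_pow_of_eq_twoSidedIntegral {a b : ℝ} (hb : 0 ≤ b) (hab : b ≤ a)
    {F : ℕ → ℝ → ℝ} (hF0 : ∀ x ∈ Icc (0:ℝ) 1, F 0 x = 1)
    (hFrec : ∀ n, ∀ x ∈ Icc (0:ℝ) 1, F (n + 1) x = twoSidedIntegral a b (F n) x) (n : ℕ) :
    ∀ x ∈ Icc (0:ℝ) 1, |F n x| ≤ a ^ n := by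
  induction n with
  | zero => intro x hx; simp [hF0 x hx]
  | succ n ih =>
    intro x hx
    rw [hFrec n x hx, pow_succ']
    exact abs_twoSidedIntegral_le hb hab ih hx

theorem tsum_eq_one_add_smul_twoSidedIntegral {a b t : ℝ} {F : ℕ → ℝ → ℝ}
    {M : ℕ → ℝ} (hFcont : ∀ n, ContinuousOn (F n) (Icc 0 1)) (hM : Summable M)
    (hFM : ∀ n, ∀ u ∈ Icc (0:ℝ) 1, |F n u * t ^ n| ≤ M n)
    (hF0 : ∀ x ∈ Icc (0:ℝ) 1, F 0 x = 1)
    (hFrec : ∀ n, ∀ x ∈ Icc (0:ℝ) 1, F (n + 1) x = twoSidedIntegral a b (F n) x)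
    {x : ℝ} (hx : x ∈ Icc (0:ℝ) 1) :
    ∑' n, F n x * t ^ n = 1 + t * twoSidedIntegral a b (fun u => ∑' n, F n u * t ^ n) x := by
  have hshift := (hasSum_twoSidedIntegral a b (f := fun n u => F n u * t ^ n)
    (fun n => (hFcont n).mul continuousOn_const) hM hFM hx).mul_left t
  have hterm : ∀ n, t * twoSidedIntegral a b (fun u => F n u * t ^ n) x =
      F (n + 1) x * t ^ (n + 1) := fun n => by
    rw [twoSidedIntegral_mul_const, hFrec n x hx, pow_succ]
    ring
  simp only [hterm] at hshift
  rw [(HasSum.zero_add (f := fun n => F n x * t ^ n) hshift).tsum_eq, hF0 x hx, pow_zero,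
    one_mul]

/-- Let `a > b > 0` and let `(F n)ₙ` be the continuous functions on `[0,1]` with `F 0 = 1` and
`F n = a·L*(F (n-1)) + b·L(F (n-1))`, where `(L* f)(x) = ∫₀ˣ f` and `(L f)(x) = ∫ₓ¹ f`.
Then there is `t₀ > 0` such that for `|t| < t₀` and `x ∈ [0,1]` the series `Σ F n (x)·tⁿ`
converges absolutely with sum `(a−b)·e^{(a−b)tx} / (a − b·e^{(a−b)t})`. -/
theorem moment_generating_function_S (a b : ℝ) (hb : 0 < b) (hab : b < a)
    (F : ℕ → ℝ → ℝ)
    (hFcont : ∀ n, ContinuousOn (F n) (Set.Icc 0 1))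
    (hF0 : ∀ x ∈ Set.Icc (0:ℝ) 1, F 0 x = 1)
    (hFrec : ∀ n, ∀ x ∈ Set.Icc (0:ℝ) 1,
      F (n + 1) x = a * (∫ t in (0:ℝ)..x, F n t) + b * ∫ t in x..(1:ℝ), F n t) :
    ∃ t₀ : ℝ, 0 < t₀ ∧ ∀ t : ℝ, |t| < t₀ → ∀ x ∈ Set.Icc (0:ℝ) 1,
      Summable (fun n : ℕ => |F n x * t ^ n|) ∧
      ∑' n : ℕ, F n x * t ^ n =
        (a - b) * Real.exp ((a - b) * t * x) / (a - b * Real.exp ((a - b) * t)) := by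
  have ha : 0 < a := hb.trans hab
  have hlog : 0 < Real.log (a / b) := Real.log_pos ((one_lt_div hb).2 hab)
  refine ⟨min (1 / a) (Real.log (a / b) / (a - b)),
    lt_min (by positivity) (div_pos hlog (sub_pos.2 hab)), fun t ht x hx => ?_⟩
  have hta : |t| * a < 1 := (lt_div_iff₀ ha).1 (ht.trans_le (min_le_left _ _))
  have hD : 0 < a - b * Real.exp ((a - b) * t) := by
    have hexp : (a - b) * t < Real.log (a / b) := by
      have := (lt_div_iff₀ (sub_pos.2 hab)).1 (ht.trans_le (min_le_right _ _))
      nlinarith [le_abs_self t]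
    have := (lt_div_iff₀' hb).1 <| (Real.lt_log_iff_exp_lt (by positivity)).1 hexp
    linarith
  have hFpow := abs_le_pow_of_eq_twoSidedIntegral hb.le hab.le hF0 hFrec
  have hgeo : Summable fun n : ℕ => (a * |t|) ^ n :=
    summable_geometric_of_lt_one (by positivity) (by linarith [mul_comm a |t|])
  have hterm : ∀ n, ∀ u ∈ Icc (0:ℝ) 1, |F n u * t ^ n| ≤ (a * |t|) ^ n := fun n u hu => by
    rw [abs_mul, abs_pow, mul_pow]
    exact mul_le_mul_of_nonneg_right (hFpow n u hu) (by positivity)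
  refine ⟨hgeo.of_nonneg_of_le (fun _ => abs_nonneg _) (hterm · x hx), ?_⟩
  refine eqOn_of_eq_add_smul_twoSidedIntegral (g := fun x => ∑' n, F n x * t ^ n)
    hb.le hab.le hta ?_ (by fun_prop : Continuous _).continuousOn
    (fun y hy => tsum_eq_one_add_smul_twoSidedIntegral hFcont hgeo hterm hF0 hFrec hy)
    (fun y _ => exp_eq_one_add_smul_twoSidedIntegral hD.ne' y) hx
  exact continuousOn_tsum (fun n => (hFcont n).mul continuousOn_const) hgeo
    fun n u hu => (Real.norm_eq_abs _).trans_le (hterm n u hu)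
end

section
/- Let a > b > 0 be real numbers and let (F_n)_{n≥0} be the sequence of continuous functions on [0,1] defined by F₀(x) = 1 and F_n = a·L*(F_{n-1}) + b·L(F_{n-1}) for n ≥ 1. Then there exists t₀ > 0 such that for all real t with 0 < |t| < t₀, Σ_{n=0}^∞ t^{n+1}·∫₀¹ F_n(x) dx = (e^{(a−b)t} − 1)/(a − b·e^{(a−b)t}). -/
open MeasureTheory Set Real

/-!
For `|t| < 1 / a` the bound `|Fₙ| ≤ aⁿ` makes `G = ∑ tⁿ Fₙ` converge uniformly on `[0, 1]`, and
summing the recursion gives `G = 1 + t (a L* G + b L G)`. Differentiating, `G' = (a - b) t G`, so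
`G(x) = G(0) e^{(a - b) t x}` with `G(0) = 1 + t b ∫₀¹ G`; these two facts determine
`t ∫₀¹ G = ∑ tⁿ⁺¹ ∫₀¹ Fₙ`. The radius `1 / a` also keeps `a - b e^{(a - b) t}` positive, because
`r e^{1 - r} ≤ 1` for `r = b / a`.
-/

theorem mul_integral_eq_of_integral_equation {g : ℝ → ℝ} {α β γ : ℝ}
    (hg : ContinuousOn g (Icc 0 1))
    (heq : ∀ x ∈ Icc (0 : ℝ) 1,
      g x = α + β * (∫ y in 0..x, g y) + γ * ∫ y in x..1, g y) :
    (β - γ) * ∫ x in 0..1, g x = (α + γ * ∫ x in 0..1, g x) * (exp (β - γ) - 1) := by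
  set S := ∫ x in 0..1, g x
  set k := β - γ
  set P : ℝ → ℝ := fun x => ∫ y in 0..x, g y
  have hint : ∀ u ∈ Icc (0 : ℝ) 1, ∀ v ∈ Icc (0 : ℝ) 1,
      IntervalIntegrable g volume u v :=
    fun u hu v hv => (hg.mono (uIcc_subset_Icc hu hv)).intervalIntegrable
  have hgP : ∀ x ∈ Icc (0 : ℝ) 1, g x = α + γ * S + k * P x := by
    intro x hx
    have hsplit : P x + ∫ y in x..1, g y = S :=
      intervalIntegral.integral_add_adjacent_intervals (hint 0 (by simp) x hx)
        (hint x hx 1 (by simp))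
    rw [heq x hx, ← hsplit]
    ring
  have hPcont : ContinuousOn P (Icc 0 1) := by
    simpa [uIcc_of_le zero_le_one] using
      intervalIntegral.continuousOn_primitive_interval' (hint 0 (by simp) 1 (by simp))
        left_mem_uIcc
  have hPderiv : ∀ x ∈ Ioo (0 : ℝ) 1, HasDerivAt P (g x) x := fun x hx =>
    intervalIntegral.integral_hasDerivAt_right
      (hint 0 (by simp) x (Ioo_subset_Icc_self hx))
      ((hg.mono Ioo_subset_Icc_self).stronglyMeasurableAtFilter isOpen_Ioo x hx)
      (hg.continuousAt (Icc_mem_nhds hx.1 hx.2))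
  -- `g = α + γ S + k P` with `P' = g`, so `exp (-k x) * g x` has zero derivative.
  set h : ℝ → ℝ := fun x => exp (-k * x) * (α + γ * S + k * P x)
  have hconst : ∫ _ in (0 : ℝ)..1, (0 : ℝ) = h 1 - h 0 := by
    refine intervalIntegral.integral_eq_sub_of_hasDerivAt_of_le zero_le_one
      (by fun_prop) (fun x hx => ?_) intervalIntegrable_const
    have hd := (((hasDerivAt_id' x).const_mul (-k)).exp).fun_mul
      (((hPderiv x hx).const_mul k).const_add (α + γ * S))
    refine hd.congr_deriv ?_
    rw [hgP x (Ioo_subset_Icc_self hx)]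
    ring
  have hh : exp (-k) * (α + γ * S + k * S) = α + γ * S := by
    simp only [h, P, intervalIntegral.integral_zero, intervalIntegral.integral_same, mul_one,
      mul_zero, add_zero, exp_zero, one_mul] at hconst
    exact (sub_eq_zero.mp hconst.symm)
  have hexp : exp k * exp (-k) = 1 := by rw [← exp_add, add_neg_cancel, exp_zero]
  linear_combination (exp k) * hh - (α + γ * S + k * S) * hexp

theorem abs_le_pow_of_rec {a b : ℝ} {F : ℕ → ℝ → ℝ} (hb : 0 ≤ b) (hba : b ≤ a)
    (hF0 : ∀ x ∈ Icc (0 : ℝ) 1, F 0 x = 1)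
    (hFrec : ∀ n, ∀ x ∈ Icc (0 : ℝ) 1,
      F (n + 1) x = a * (∫ t in (0 : ℝ)..x, F n t) + b * ∫ t in x..(1 : ℝ), F n t) :
    ∀ n, ∀ x ∈ Icc (0 : ℝ) 1, |F n x| ≤ a ^ n := by
  intro n
  induction n with
  | zero => intro x hx; simp [hF0 x hx]
  | succ n ih =>
    intro x hx
    have hbound : ∀ u ∈ Icc (0 : ℝ) 1, ∀ v ∈ Icc (0 : ℝ) 1,
        |∫ t in u..v, F n t| ≤ a ^ n * |v - u| := fun u hu v hv =>
      intervalIntegral.norm_integral_le_of_norm_le_const fun y hy =>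
        (Real.norm_eq_abs _).trans_le (ih y (uIcc_subset_Icc hu hv (uIoc_subset_uIcc hy)))
    have h0x := hbound 0 (by simp) x hx
    have hx1 := hbound x hx 1 (by simp)
    rw [abs_of_nonneg (by linarith [hx.1] : (0 : ℝ) ≤ x - 0)] at h0x
    rw [abs_of_nonneg (by linarith [hx.2] : (0 : ℝ) ≤ 1 - x)] at hx1
    have ha : 0 ≤ a := hb.trans hba
    have han : 0 ≤ a ^ n := pow_nonneg ha n
    calc |F (n + 1) x|
        ≤ a * |∫ t in (0 : ℝ)..x, F n t| + b * |∫ t in x..(1 : ℝ), F n t| := by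
          rw [hFrec n x hx]
          refine (abs_add_le _ _).trans ?_
          rw [abs_mul, abs_mul, abs_of_nonneg ha, abs_of_nonneg hb]
      _ ≤ a * (a ^ n * (x - 0)) + b * (a ^ n * (1 - x)) := by gcongr
      _ ≤ a * (a ^ n * (x - 0)) + a * (a ^ n * (1 - x)) := by
          gcongr
          exact mul_nonneg han (sub_nonneg.2 hx.2)
      _ = a ^ (n + 1) := by ring

noncomputable def genFun (F : ℕ → ℝ → ℝ) (t x : ℝ) : ℝ := ∑' n, t ^ n * F n x

section genFun

variable {F : ℕ → ℝ → ℝ} {M t : ℝ}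

theorem norm_pow_mul_apply_le (hF : ∀ n, ∀ x ∈ Icc (0 : ℝ) 1, |F n x| ≤ M ^ n) {x : ℝ}
    (hx : x ∈ Icc (0 : ℝ) 1) (n : ℕ) : ‖t ^ n * F n x‖ ≤ (|t| * M) ^ n := by
  rw [norm_mul, norm_pow, Real.norm_eq_abs, Real.norm_eq_abs, mul_pow]
  gcongr
  exact hF n x hx

theorem hasSum_genFun (hM : 0 ≤ M) (hF : ∀ n, ∀ x ∈ Icc (0 : ℝ) 1, |F n x| ≤ M ^ n)
    (ht : |t| * M < 1) {x : ℝ} (hx : x ∈ Icc (0 : ℝ) 1) :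
    HasSum (fun n => t ^ n * F n x) (genFun F t x) :=
  (Summable.of_norm_bounded (summable_geometric_of_lt_one (by positivity) ht)
    (norm_pow_mul_apply_le hF hx)).hasSum

theorem continuousOn_genFun (hcont : ∀ n, ContinuousOn (F n) (Icc 0 1)) (hM : 0 ≤ M)
    (hF : ∀ n, ∀ x ∈ Icc (0 : ℝ) 1, |F n x| ≤ M ^ n) (ht : |t| * M < 1) :
    ContinuousOn (genFun F t) (Icc 0 1) :=
  continuousOn_tsum (fun n => continuousOn_const.mul (hcont n))
    (summable_geometric_of_lt_one (by positivity) ht) fun n _ hx => norm_pow_mul_apply_le hF hx n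

theorem hasSum_intervalIntegral_genFun (hcont : ∀ n, ContinuousOn (F n) (Icc 0 1))
    (hM : 0 ≤ M) (hF : ∀ n, ∀ x ∈ Icc (0 : ℝ) 1, |F n x| ≤ M ^ n) (ht : |t| * M < 1)
    {u v : ℝ} (hu : u ∈ Icc (0 : ℝ) 1) (hv : v ∈ Icc (0 : ℝ) 1) :
    HasSum (fun n => t ^ n * ∫ x in u..v, F n x) (∫ x in u..v, genFun F t x) := by
  have hsub : uIoc u v ⊆ Icc 0 1 := uIoc_subset_uIcc.trans (uIcc_subset_Icc hu hv)
  simp_rw [← intervalIntegral.integral_const_mul]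
  refine intervalIntegral.hasSum_integral_of_dominated_convergence (fun n _ => (|t| * M) ^ n)
    (fun n => ((continuousOn_const.mul (hcont n)).mono hsub).aestronglyMeasurable
      measurableSet_uIoc)
    (fun n => ae_of_all _ fun x hx => norm_pow_mul_apply_le hF (hsub hx) n)
    (ae_of_all _ fun _ _ => summable_geometric_of_lt_one (by positivity) ht)
    intervalIntegrable_const
    (ae_of_all _ fun x hx => hasSum_genFun hM hF ht (hsub hx))

end genFun

theorem genFun_eq_integral_equation {a b t : ℝ} {F : ℕ → ℝ → ℝ} (hb : 0 ≤ b) (hba : b ≤ a)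
    (hcont : ∀ n, ContinuousOn (F n) (Icc 0 1))
    (hF0 : ∀ x ∈ Icc (0 : ℝ) 1, F 0 x = 1)
    (hFrec : ∀ n, ∀ x ∈ Icc (0 : ℝ) 1,
      F (n + 1) x = a * (∫ t in (0 : ℝ)..x, F n t) + b * ∫ t in x..(1 : ℝ), F n t)
    (ht : |t| * a < 1) :
    ∀ x ∈ Icc (0 : ℝ) 1, genFun F t x =
      1 + t * a * (∫ y in 0..x, genFun F t y) + t * b * ∫ y in x..1, genFun F t y := by
  intro x hx
  have ha : 0 ≤ a := hb.trans hba
  have hF := abs_le_pow_of_rec hb hba hF0 hFrec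
  have h0x := hasSum_intervalIntegral_genFun hcont ha hF ht (left_mem_Icc.2 zero_le_one) hx
  have hx1 := hasSum_intervalIntegral_genFun hcont ha hF ht hx (right_mem_Icc.2 zero_le_one)
  have hshift : (fun n => t ^ (n + 1) * F (n + 1) x) = fun n =>
      t * a * (t ^ n * ∫ y in 0..x, F n y) + t * b * (t ^ n * ∫ y in x..1, F n y) := by
    funext n
    rw [hFrec n x hx]
    ring
  have htail : HasSum (fun n => t ^ (n + 1) * F (n + 1) x)
      (t * a * (∫ y in 0..x, genFun F t y) + t * b * ∫ y in x..1, genFun F t y) := by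
    rw [hshift]
    exact (h0x.mul_left (t * a)).add (hx1.mul_left (t * b))
  have h := HasSum.zero_add (f := fun n => t ^ n * F n x) htail
  rw [pow_zero, one_mul, hF0 x hx, ← add_assoc] at h
  exact (hasSum_genFun ha hF ht hx).unique h

theorem mul_exp_lt_of_abs_lt_inv {a b t : ℝ} (hb : 0 < b) (hab : b < a) (ht : |t| < a⁻¹) :
    b * exp ((a - b) * t) < a := by
  have ha : 0 < a := hb.trans hab
  have hexponent : (a - b) * t < 1 - b / a := calc
    (a - b) * t ≤ (a - b) * |t| := mul_le_mul_of_nonneg_left (le_abs_self t) (sub_pos.2 hab).le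
    _ < (a - b) * a⁻¹ := mul_lt_mul_of_pos_left ht (sub_pos.2 hab)
    _ = 1 - b / a := by field_simp
  have hratio : b ≤ exp (b / a - 1) * a := by
    rw [← div_le_iff₀ ha]
    simpa using add_one_le_exp (b / a - 1)
  calc b * exp ((a - b) * t) < b * exp (1 - b / a) := by gcongr
    _ ≤ exp (b / a - 1) * a * exp (1 - b / a) := by gcongr
    _ = a := by rw [mul_right_comm, ← exp_add, sub_add_sub_cancel, sub_self, exp_zero, one_mul]

/-- Let `a > b > 0` and let `(F n)ₙ` be the continuous functions on `[0,1]` with `F 0 = 1` and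
`F n = a·L*(F (n-1)) + b·L(F (n-1))`, where `(L* f)(x) = ∫₀ˣ f` and `(L f)(x) = ∫ₓ¹ f`.
Then there is `t₀ > 0` such that for all real `t` with `0 < |t| < t₀`,
`Σ_{n=0}^∞ t^{n+1}·∫₀¹ F n (x) dx = (e^{(a−b)t} − 1)/(a − b·e^{(a−b)t})`. -/
theorem sum_integral_F_eq (a b : ℝ) (hb : 0 < b) (hab : b < a)
    (F : ℕ → ℝ → ℝ)
    (hFcont : ∀ n, ContinuousOn (F n) (Set.Icc 0 1))
    (hF0 : ∀ x ∈ Set.Icc (0:ℝ) 1, F 0 x = 1)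
    (hFrec : ∀ n, ∀ x ∈ Set.Icc (0:ℝ) 1,
      F (n + 1) x = a * (∫ t in (0:ℝ)..x, F n t) + b * ∫ t in x..(1:ℝ), F n t) :
    ∃ t₀ : ℝ, 0 < t₀ ∧ ∀ t : ℝ, 0 < |t| → |t| < t₀ →
      ∑' n : ℕ, t ^ (n + 1) * ∫ x in (0:ℝ)..1, F n x =
        (Real.exp ((a - b) * t) - 1) / (a - b * Real.exp ((a - b) * t)) := by
  have ha : 0 < a := hb.trans hab
  refine ⟨a⁻¹, inv_pos.2 ha, fun t _ ht => ?_⟩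
  have hta : |t| * a < 1 := (lt_div_iff₀ ha).1 (by rwa [one_div])
  have hF := abs_le_pow_of_rec hb.le hab.le hF0 hFrec
  set S := ∫ x in (0 : ℝ)..1, genFun F t x
  have hsum : HasSum (fun n => t ^ (n + 1) * ∫ x in (0 : ℝ)..1, F n x) (t * S) := by
    simpa only [pow_succ', mul_assoc] using
      (hasSum_intervalIntegral_genFun hFcont ha.le hF hta (left_mem_Icc.2 zero_le_one)
        (right_mem_Icc.2 zero_le_one)).mul_left t
  have hS := mul_integral_eq_of_integral_equation (continuousOn_genFun hFcont ha.le hF hta)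
    (genFun_eq_integral_equation hb.le hab.le hFcont hF0 hFrec hta)
  rw [show t * a - t * b = (a - b) * t by ring] at hS
  rw [hsum.tsum_eq, eq_div_iff (sub_ne_zero.2 (mul_exp_lt_of_abs_lt_inv hb hab ht).ne')]
  linear_combination hS
end

section
/- Let λ ∈ ℂ and let σ, μ ∈ ℂ with σ ≠ 0, 1 + |λ|²σ ≠ 0, and μ² = e^σ(1 + |λ|²σ)/σ. Define functions on [0,1] by z₁₁(x) = μσ·e^{σ(x−1)}, z₂₂(x) = μσ·e^{−σx}, and constants z₁₂ = −conj(λ)·σ, z₂₁ = −λ·σ. Then for every x ∈ [0,1], the 2×2 matrix z(x) = [[z₁₁(x), z₁₂],[z₂₁, z₂₂(x)]] has determinant σ (in particular is invertible), and [[L*(z₂₂)(x), −conj(λ)],[−λ, L(z₁₁)(x)]] + z(x)^{-1} = μ·I₂, where I₂ is the 2×2 identity matrix. -/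
/-!
With `E₁ = e^{σ(x-1)}` and `E₂ = e^{-σx}` one has `E₁E₂ = e^{-σ}`, so the normalisation of `μ`
makes `det z(x) = μ²σ²E₁E₂ - |λ|²σ² = σ`. Hence `z(x)⁻¹ = σ⁻¹ adj z(x) = [[μE₂, conj λ], [λ, μE₁]]`,
while `L*(z₂₂)(x) = μ(1 - E₂)` and `L(z₁₁)(x) = μ(1 - E₁)`: the exponentials cancel in the sum.
-/

open Complex ComplexConjugate

theorem intervalIntegral.integral_eq_mul_sub_of_eq_mul_exp {f : ℝ → ℂ} {c σ s : ℂ}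
    (hf : ∀ t : ℝ, f t = c * σ * exp (σ * (t - s))) (a b : ℝ) :
    ∫ t in a..b, f t = c * (exp (σ * (b - s)) - exp (σ * (a - s))) := by
  have hderiv (t : ℝ) : HasDerivAt (fun u : ℝ => c * exp (σ * (u - s))) (f t) t := by
    have := ((((hasDerivAt_id (t : ℂ)).sub_const s).const_mul σ).cexp.const_mul c).comp_ofReal
    convert this using 1 <;> simp only [hf, id, mul_one]
    ring
  have hcont : Continuous f := by
    rw [funext hf]
    fun_prop
  rw [intervalIntegral.integral_eq_sub_of_hasDerivAt (fun t _ => hderiv t)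
    (hcont.intervalIntegrable a b)]
  ring

theorem Matrix.inv_fin_two_of {K : Type*} [Field K] (a b c d : K) :
    (!![a, b; c, d])⁻¹ = (a * d - b * c)⁻¹ • !![d, -b; -c, a] := by
  rw [Matrix.inv_def, Ring.inverse_eq_inv', Matrix.det_fin_two_of, Matrix.adjugate_fin_two_of]

theorem sq_mul_mul_exp_mul_exp_eq {lam σ μ : ℂ} (hσ : σ ≠ 0)
    (hμ : μ ^ 2 = exp σ * (1 + (‖lam‖ : ℂ) ^ 2 * σ) / σ) (x : ℂ) :
    μ ^ 2 * σ * (exp (σ * (x - 1)) * exp (-σ * x)) = 1 + conj lam * lam * σ := by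
  have hexp : exp (σ * (x - 1)) * exp (-σ * x) * exp σ = 1 := by
    rw [← exp_add, ← exp_add]
    convert exp_zero using 2
    ring
  have hμσ : μ ^ 2 * σ = exp σ * (1 + conj lam * lam * σ) := by
    rw [hμ, conj_mul']
    field_simp
  linear_combination exp (σ * (x - 1)) * exp (-σ * x) * hμσ + (1 + conj lam * lam * σ) * hexp

theorem R_transform_solution_T_lambda_general (lam σ μ : ℂ) (hσ : σ ≠ 0)
    (hμ : μ ^ 2 = Complex.exp σ * (1 + (‖lam‖ : ℂ) ^ 2 * σ) / σ)
    (z11 z22 : ℝ → ℂ) (z12 z21 : ℂ)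
    (hz11 : ∀ x : ℝ, z11 x = μ * σ * Complex.exp (σ * ((x : ℂ) - 1)))
    (hz22 : ∀ x : ℝ, z22 x = μ * σ * Complex.exp (-σ * (x : ℂ)))
    (hz12 : z12 = -(starRingEnd ℂ) lam * σ) (hz21 : z21 = -lam * σ) :
    ∀ x ∈ Set.Icc (0:ℝ) 1,
      (!![z11 x, z12; z21, z22 x] : Matrix (Fin 2) (Fin 2) ℂ).det = σ ∧
      !![∫ t in (0:ℝ)..x, z22 t, -(starRingEnd ℂ) lam;
         -lam, ∫ t in x..(1:ℝ), z11 t] +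
          (!![z11 x, z12; z21, z22 x] : Matrix (Fin 2) (Fin 2) ℂ)⁻¹ =
        μ • (1 : Matrix (Fin 2) (Fin 2) ℂ) := by
  intro x _
  set E₁ := exp (σ * ((x : ℂ) - 1))
  set E₂ := exp (-σ * (x : ℂ))
  have hdet : (!![z11 x, z12; z21, z22 x]).det = σ := by
    rw [Matrix.det_fin_two_of, hz11, hz22, hz12, hz21]
    linear_combination σ * sq_mul_mul_exp_mul_exp_eq hσ hμ x
  have hinv : (!![z11 x, z12; z21, z22 x])⁻¹ = !![μ * E₂, conj lam; lam, μ * E₁] := by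
    rw [Matrix.inv_fin_two_of, ← Matrix.det_fin_two_of, hdet, hz11, hz22, hz12, hz21]
    ext i j
    fin_cases i <;> fin_cases j <;> simp [field, E₁, E₂]
  have hL₂ : ∫ t in (0:ℝ)..x, z22 t = μ * (1 - E₂) := by
    rw [intervalIntegral.integral_eq_mul_sub_of_eq_mul_exp (c := -μ) (σ := -σ) (s := 0)
      fun t => by rw [hz22, sub_zero]; ring]
    simp only [sub_zero, ofReal_zero, mul_zero, exp_zero]
    ring
  have hL₁ : ∫ t in x..(1:ℝ), z11 t = μ * (1 - E₁) := by
    rw [intervalIntegral.integral_eq_mul_sub_of_eq_mul_exp hz11]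
    simp only [ofReal_one, sub_self, mul_zero, exp_zero]
    ring
  refine ⟨hdet, ?_⟩
  rw [hinv, hL₁, hL₂, Matrix.one_fin_two, Matrix.smul_of, Matrix.of_add_of]
  congr 1
  simp only [Matrix.smul_cons, Matrix.smul_empty, smul_eq_mul, Matrix.cons_add_cons,
    Matrix.empty_add_empty]
  ring_nf

/-- Verification that the explicit matrix `z` solves the amalgamated `R`-transform equation for
`T̃_λ`: with `σ ≠ 0`, `1 + |λ|²σ ≠ 0`, `μ² = e^σ(1+|λ|²σ)/σ`,
`z₁₁(x) = μσe^{σ(x−1)}`, `z₂₂(x) = μσe^{−σx}`, `z₁₂ = −conj(λ)σ`, `z₂₁ = −λσ`, one has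
`det z(x) = σ` and `[[L*(z₂₂)(x), −conj λ],[−λ, L(z₁₁)(x)]] + z(x)⁻¹ = μ·I₂` on `[0,1]`. -/
theorem R_transform_solution_T_lambda (lam σ μ : ℂ) (hσ : σ ≠ 0)
    (hlam : 1 + (‖lam‖ : ℂ) ^ 2 * σ ≠ 0)
    (hμ : μ ^ 2 = Complex.exp σ * (1 + (‖lam‖ : ℂ) ^ 2 * σ) / σ)
    (z11 z22 : ℝ → ℂ) (z12 z21 : ℂ)
    (hz11 : ∀ x : ℝ, z11 x = μ * σ * Complex.exp (σ * ((x : ℂ) - 1)))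
    (hz22 : ∀ x : ℝ, z22 x = μ * σ * Complex.exp (-σ * (x : ℂ)))
    (hz12 : z12 = -(starRingEnd ℂ) lam * σ) (hz21 : z21 = -lam * σ) :
    ∀ x ∈ Set.Icc (0:ℝ) 1,
      (!![z11 x, z12; z21, z22 x] : Matrix (Fin 2) (Fin 2) ℂ).det = σ ∧
      !![∫ t in (0:ℝ)..x, z22 t, -(starRingEnd ℂ) lam;
         -lam, ∫ t in x..(1:ℝ), z11 t] +
          (!![z11 x, z12; z21, z22 x] : Matrix (Fin 2) (Fin 2) ℂ)⁻¹ =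
        μ • (1 : Matrix (Fin 2) (Fin 2) ℂ) :=
  R_transform_solution_T_lambda_general lam σ μ hσ hμ z11 z22 z12 z21 hz11 hz22 hz12 hz21
end

section
/- Let μ ∈ ℂ, μ ≠ 0, and let f : [0,1] → ℂ be twice continuously differentiable. Let f^{(-1)}, f^{(-2)} : [0,1] → ℂ satisfy (f^{(-2)})' = f^{(-1)}, (f^{(-1)})' = f, f^{(-1)}(1) = 0, and f^{(-2)}(1) = μ³. Assume f(0) = μ^{-1}, f'(0) = 0, and that for all x ∈ [0,1]: f(x) ≠ 0; f^{(-1)}(x)f'(x) − f(x)² ≠ 0; and the 3×3 determinant det[[f^{(-2)}(x), f^{(-1)}(x), f(x)],[f^{(-1)}(x), f(x), f'(x)],[f(x), f'(x), f''(x)]] = 0. Define functions on [0,1]: w₁₁ = f; w₂₂ = w₄₄ = −(1/μ)·(f^{(-1)}f' − f²)/f²; w₂₄ = (1/μ²)·f^{(-1)}·(f^{(-1)}f' − f²)/f²; w₄₂ = f'/f²; w₃₃ = μ²·f·(f f'' − (f')²)/(f^{(-1)}f' − f²)². Then for all x ∈ [0,1]: (1) L*(w₄₂)(x) + 1/w₁₁(x)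 = μ; (2) w₃₃(x) ≠ 0 and L(w₂₄)(x) + 1/w₃₃(x) = μ; (3) the 2×2 matrix W(x) = [[w₂₂(x), w₂₄(x)],[w₄₂(x), w₄₄(x)]] is invertible and [[0, L(w₁₁)(x)],[L*(w₃₃)(x), 0]] + W(x)^{-1} = μ·I₂. -/
/-!
Every identity is the fundamental theorem of calculus with an explicit antiderivative:
`-1/f` for `w₄₂`, the Schur complement `(f^{(-2)} - (f^{(-1)})² / f) / μ²` for `w₂₄`,
`-μ² f' / (f^{(-1)} f' - f²)` for `w₃₃`, and `f^{(-1)}` for `w₁₁`; the boundary values at `0`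
and `1` produce `μ`. The vanishing `3 × 3` Hankel determinant enters only through the
Desnanot–Jacobi identity, which makes `1 / w₃₃` equal to the Schur complement above (and
`w₃₃ ≠ 0`). Finally `W⁻¹ = [[μ, f^{(-1)}], [μ² f' / (f^{(-1)} f' - f²), μ]]`, whose
off-diagonal entries are cancelled by `L(w₁₁) = -f^{(-1)}` and `L*(w₃₃)`.
-/

open Set intervalIntegral

section Deriv

variable {𝕜 𝕜' : Type*} [NontriviallyNormedField 𝕜] [NontriviallyNormedField 𝕜']
  [NormedAlgebra 𝕜 𝕜'] {f f' f'' F1 F2 : 𝕜 → 𝕜'} {t : 𝕜}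

theorem hasDerivAt_neg_one_div (hf : HasDerivAt f (f' t) t) (h0 : f t ≠ 0) :
    HasDerivAt (fun s => -(1 / f s)) (f' t / f t ^ 2) t := by
  simpa [one_div, neg_div] using (hf.fun_inv h0).fun_neg

theorem hasDerivAt_const_mul_sub_sq_div (c : 𝕜') (hF2 : HasDerivAt F2 (F1 t) t)
    (hF1 : HasDerivAt F1 (f t) t) (hf : HasDerivAt f (f' t) t) (h0 : f t ≠ 0) :
    HasDerivAt (fun s => c * (F2 s - F1 s ^ 2 / f s))
      (c * F1 t * (F1 t * f' t - f t ^ 2) / f t ^ 2) t := by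
  refine ((hF2.fun_sub ((hF1.fun_pow 2).fun_div hf h0)).const_mul c).congr_deriv ?_
  field_simp
  ring

theorem hasDerivAt_neg_const_mul_div_mul_sub_sq (c : 𝕜') (hF1 : HasDerivAt F1 (f t) t)
    (hf : HasDerivAt f (f' t) t) (hf' : HasDerivAt f' (f'' t) t)
    (hg : F1 t * f' t - f t ^ 2 ≠ 0) :
    HasDerivAt (fun s => -(c * f' s / (F1 s * f' s - f s ^ 2)))
      (c * f t * (f t * f'' t - f' t ^ 2) / (F1 t * f' t - f t ^ 2) ^ 2) t := by
  refine ((hf'.const_mul c).fun_div ((hF1.fun_mul hf').fun_sub (hf.fun_pow 2)) hg).fun_neg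
    |>.congr_deriv ?_
  field_simp
  ring

end Deriv

theorem intervalIntegral.integral_eq_sub_of_hasDerivAt_of_continuousOn {E : Type*}
    [NormedAddCommGroup E] [NormedSpace ℝ E] [CompleteSpace E] {F F' : ℝ → E} {s : Set ℝ}
    {a b : ℝ} (hs : uIcc a b ⊆ s) (hF : ∀ t ∈ s, HasDerivAt F (F' t) t)
    (hF' : ContinuousOn F' s) : ∫ t in a..b, F' t = F b - F a :=
  integral_eq_sub_of_hasDerivAt (fun t ht => hF t (hs ht)) (hF'.mono hs).intervalIntegrable

section Integral

variable {𝕜 : Type*} [RCLike 𝕜] {f f' f'' F1 F2 : ℝ → 𝕜} {s : Set ℝ} {a b : ℝ}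

theorem integral_div_sq_eq_one_div_sub_one_div (hs : uIcc a b ⊆ s)
    (hf : ∀ t ∈ s, HasDerivAt f (f' t) t) (hf' : ContinuousOn f' s) (h0 : ∀ t ∈ s, f t ≠ 0) :
    ∫ t in a..b, f' t / f t ^ 2 = 1 / f a - 1 / f b := by
  have hcf := HasDerivAt.continuousOn hf
  rw [integral_eq_sub_of_hasDerivAt_of_continuousOn hs
    (fun t ht => hasDerivAt_neg_one_div (hf t ht) (h0 t ht)) (by fun_prop (disch := simp_all))]
  ring

theorem integral_mul_mul_sub_sq_div_sq (c : 𝕜) (hs : uIcc a b ⊆ s)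
    (hF2 : ∀ t ∈ s, HasDerivAt F2 (F1 t) t) (hF1 : ∀ t ∈ s, HasDerivAt F1 (f t) t)
    (hf : ∀ t ∈ s, HasDerivAt f (f' t) t) (hf' : ContinuousOn f' s) (h0 : ∀ t ∈ s, f t ≠ 0) :
    ∫ t in a..b, c * F1 t * (F1 t * f' t - f t ^ 2) / f t ^ 2 =
      c * (F2 b - F1 b ^ 2 / f b) - c * (F2 a - F1 a ^ 2 / f a) := by
  have hcf := HasDerivAt.continuousOn hf
  have hcF1 := HasDerivAt.continuousOn hF1
  exact integral_eq_sub_of_hasDerivAt_of_continuousOn hs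
    (fun t ht => hasDerivAt_const_mul_sub_sq_div c (hF2 t ht) (hF1 t ht) (hf t ht) (h0 t ht))
    (by fun_prop (disch := simp_all))

theorem integral_mul_mul_sub_sq_div_sub_sq_sq (c : 𝕜) (hs : uIcc a b ⊆ s)
    (hF1 : ∀ t ∈ s, HasDerivAt F1 (f t) t) (hf : ∀ t ∈ s, HasDerivAt f (f' t) t)
    (hf' : ∀ t ∈ s, HasDerivAt f' (f'' t) t) (hf'' : ContinuousOn f'' s)
    (hg : ∀ t ∈ s, F1 t * f' t - f t ^ 2 ≠ 0) :
    ∫ t in a..b, c * f t * (f t * f'' t - f' t ^ 2) / (F1 t * f' t - f t ^ 2) ^ 2 =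
      c * f' a / (F1 a * f' a - f a ^ 2) - c * f' b / (F1 b * f' b - f b ^ 2) := by
  have hcf := HasDerivAt.continuousOn hf
  have hcf' := HasDerivAt.continuousOn hf'
  have hcF1 := HasDerivAt.continuousOn hF1
  rw [integral_eq_sub_of_hasDerivAt_of_continuousOn hs (fun t ht =>
      hasDerivAt_neg_const_mul_div_mul_sub_sq c (hF1 t ht) (hf t ht) (hf' t ht) (hg t ht))
    (by fun_prop (disch := simp_all))]
  ring

end Integral

/-- The Desnanot–Jacobi identity for a `3 × 3` Hankel matrix. -/
theorem mul_det_hankel_fin_three {R : Type*} [CommRing R] (a b c d e : R) :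
    c * (!![a, b, c; b, c, d; c, d, e] : Matrix (Fin 3) (Fin 3) R).det =
      (c * e - d ^ 2) * (a * c - b ^ 2) - (b * d - c ^ 2) ^ 2 := by
  simp only [Matrix.det_fin_three, Fin.isValue, Matrix.of_apply, Matrix.cons_val',
    Matrix.cons_val_zero, Matrix.cons_val_fin_one, Matrix.cons_val_one, Matrix.cons_val]
  ring

section Field

variable {K : Type*} [Field K] {a b c d e : K}

theorem mul_sub_sq_ne_zero_of_det_hankel_eq_zero
    (hdet : (!![a, b, c; b, c, d; c, d, e] : Matrix (Fin 3) (Fin 3) K).det = 0)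
    (hg : b * d - c ^ 2 ≠ 0) : c * e - d ^ 2 ≠ 0 := by
  intro hh
  have := mul_det_hankel_fin_three a b c d e
  rw [hdet, hh, mul_zero, zero_mul, zero_sub, zero_eq_neg] at this
  exact hg (pow_eq_zero_iff two_ne_zero |>.mp this)

theorem one_div_eq_of_det_hankel_eq_zero {μ : K} (hμ : μ ≠ 0) (hc : c ≠ 0)
    (hdet : (!![a, b, c; b, c, d; c, d, e] : Matrix (Fin 3) (Fin 3) K).det = 0)
    (hg : b * d - c ^ 2 ≠ 0) :
    1 / (μ ^ 2 * c * (c * e - d ^ 2) / (b * d - c ^ 2) ^ 2) = 1 / μ ^ 2 * (a - b ^ 2 / c) := by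
  have hh := mul_sub_sq_ne_zero_of_det_hankel_eq_zero hdet hg
  have key := mul_det_hankel_fin_three a b c d e
  rw [hdet, mul_zero] at key
  field_simp
  linear_combination key

theorem mul_eq_one_fin_two_of_ne_zero {μ : K} (hμ : μ ≠ 0) (hc : c ≠ 0) (hg : b * d - c ^ 2 ≠ 0) :
    !![-(1 / μ) * (b * d - c ^ 2) / c ^ 2, 1 / μ ^ 2 * b * (b * d - c ^ 2) / c ^ 2;
        d / c ^ 2, -(1 / μ) * (b * d - c ^ 2) / c ^ 2] *
      !![μ, b; μ ^ 2 * d / (b * d - c ^ 2), μ] = 1 := by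
  have hg' : d * b - c ^ 2 ≠ 0 := by rwa [mul_comm]
  rw [Matrix.mul_fin_two, Matrix.one_fin_two]
  congr 1
  refine Matrix.vec2_eq (Matrix.vec2_eq ?_ ?_) (Matrix.vec2_eq ?_ ?_) <;> field_simp <;> ring

end Field

/-- Verification of the explicit solution of the `M₄(D)`-valued `R`-transform equation for the
quasi-nilpotent DT-operator in the case `k = 2`.  Here `F1 = f^{(-1)}`, `F2 = f^{(-2)}` are
antiderivatives of a twice continuously differentiable `f` with `F1 1 = 0`, `F2 1 = μ³`,
`f 0 = μ⁻¹`, `f' 0 = 0`, `f` nonvanishing, `f^{(-1)}f' − f² ≠ 0`, and the 3×3 Hankel determinant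
of `(f^{(-2)},…,f'')` vanishing on `[0,1]`.  With
`w₁₁ = f`, `w₂₂ = w₄₄ = −(1/μ)(f^{(-1)}f' − f²)/f²`, `w₂₄ = (1/μ²)f^{(-1)}(f^{(-1)}f' − f²)/f²`,
`w₄₂ = f'/f²`, `w₃₃ = μ²f(ff'' − (f')²)/(f^{(-1)}f' − f²)²`, one has on `[0,1]`:
(1) `L*(w₄₂) + 1/w₁₁ = μ`; (2) `w₃₃ ≠ 0` and `L(w₂₄) + 1/w₃₃ = μ`; and (3) the matrix
`W = [[w₂₂, w₂₄],[w₄₂, w₄₄]]` is invertible with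
`[[0, L(w₁₁)],[L*(w₃₃), 0]] + W⁻¹ = μ·I₂`. -/
theorem R_transform_solution_k_two (μ : ℂ) (hμ : μ ≠ 0)
    (f f' f'' F1 F2 : ℝ → ℂ)
    (hf : ∀ x ∈ Set.Icc (0:ℝ) 1, HasDerivAt f (f' x) x)
    (hf' : ∀ x ∈ Set.Icc (0:ℝ) 1, HasDerivAt f' (f'' x) x)
    (hf''cont : ContinuousOn f'' (Set.Icc 0 1))
    (hF1 : ∀ x ∈ Set.Icc (0:ℝ) 1, HasDerivAt F1 (f x) x)
    (hF2 : ∀ x ∈ Set.Icc (0:ℝ) 1, HasDerivAt F2 (F1 x) x)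
    (hF1_one : F1 1 = 0) (hF2_one : F2 1 = μ ^ 3)
    (hf_zero : f 0 = μ⁻¹) (hf'_zero : f' 0 = 0)
    (hf_ne : ∀ x ∈ Set.Icc (0:ℝ) 1, f x ≠ 0)
    (h2_ne : ∀ x ∈ Set.Icc (0:ℝ) 1, F1 x * f' x - (f x) ^ 2 ≠ 0)
    (h3_det : ∀ x ∈ Set.Icc (0:ℝ) 1,
      (!![F2 x, F1 x, f x; F1 x, f x, f' x; f x, f' x, f'' x] :
        Matrix (Fin 3) (Fin 3) ℂ).det = 0)
    (w11 w22 w24 w42 w33 : ℝ → ℂ)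
    (hw11 : ∀ x, w11 x = f x)
    (hw22 : ∀ x, w22 x = -(1 / μ) * (F1 x * f' x - (f x) ^ 2) / (f x) ^ 2)
    (hw24 : ∀ x, w24 x = (1 / μ ^ 2) * F1 x * (F1 x * f' x - (f x) ^ 2) / (f x) ^ 2)
    (hw42 : ∀ x, w42 x = f' x / (f x) ^ 2)
    (hw33 : ∀ x, w33 x = μ ^ 2 * f x * (f x * f'' x - (f' x) ^ 2) /
        (F1 x * f' x - (f x) ^ 2) ^ 2) :
    ∀ x ∈ Set.Icc (0:ℝ) 1,
      ((∫ t in (0:ℝ)..x, w42 t) + 1 / w11 x = μ) ∧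
      (w33 x ≠ 0 ∧ (∫ t in x..(1:ℝ), w24 t) + 1 / w33 x = μ) ∧
      (IsUnit (!![w22 x, w24 x; w42 x, w22 x] : Matrix (Fin 2) (Fin 2) ℂ) ∧
        !![0, ∫ t in x..(1:ℝ), w11 t; ∫ t in (0:ℝ)..x, w33 t, 0] +
            (!![w22 x, w24 x; w42 x, w22 x] : Matrix (Fin 2) (Fin 2) ℂ)⁻¹ =
          μ • (1 : Matrix (Fin 2) (Fin 2) ℂ)) := by
  intro x hx
  simp only [hw11, hw22, hw24, hw42, hw33]
  have h0x : uIcc 0 x ⊆ Icc (0:ℝ) 1 := uIcc_subset_Icc (left_mem_Icc.2 zero_le_one) hx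
  have hx1 : uIcc x 1 ⊆ Icc (0:ℝ) 1 := uIcc_subset_Icc hx (right_mem_Icc.2 zero_le_one)
  have hW := mul_eq_one_fin_two_of_ne_zero hμ (hf_ne x hx) (h2_ne x hx)
  refine ⟨?_, ⟨?_, ?_⟩, IsUnit.of_mul_eq_one _ hW, ?_⟩
  · rw [integral_div_sq_eq_one_div_sub_one_div h0x hf (HasDerivAt.continuousOn hf') hf_ne,
      hf_zero, sub_add_cancel, one_div, inv_inv]
  · exact div_ne_zero (mul_ne_zero (mul_ne_zero (pow_ne_zero 2 hμ) (hf_ne x hx))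
      (mul_sub_sq_ne_zero_of_det_hankel_eq_zero (h3_det x hx) (h2_ne x hx)))
      (pow_ne_zero 2 (h2_ne x hx))
  · rw [integral_mul_mul_sub_sq_div_sq _ hx1 hF2 hF1 hf (HasDerivAt.continuousOn hf') hf_ne,
      one_div_eq_of_det_hankel_eq_zero hμ (hf_ne x hx) (h3_det x hx) (h2_ne x hx),
      hF1_one, hF2_one, sub_add_cancel, zero_pow two_ne_zero, zero_div, sub_zero]
    field_simp
  · rw [Matrix.inv_eq_right_inv hW,
      integral_mul_mul_sub_sq_div_sub_sq_sq _ h0x hF1 hf hf' hf''cont h2_ne,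
      integral_eq_sub_of_hasDerivAt_of_continuousOn hx1 hF1 (HasDerivAt.continuousOn hf),
      hF1_one, hf'_zero]
    ext i j
    fin_cases i <;> fin_cases j <;> simp
end

section
/- Let s, μ ∈ ℂ be nonzero with μ² = 1/(2s), and let α₁, α₂ ∈ ℂ be nonzero and distinct with α₁·e^{−α₁} = s and α₂·e^{−α₂} = −s. Put γ₁ = α₂/(α₂ − α₁) and γ₂ = α₁/(α₁ − α₂). Define f(x) = μ^{-1}(γ₁e^{2α₁x} + γ₂e^{2α₂x}), f^{(-1)}(x) = (2μ)^{-1}(γ₁α₁^{-1}e^{2α₁x} + γ₂α₂^{-1}e^{2α₂x}), f^{(-2)}(x) = (4μ)^{-1}(γ₁α₁^{-2}e^{2α₁x} + γ₂α₂^{-2}e^{2α₂x}) for x ∈ ℝ. Then: (f^{(-2)})' = f^{(-1)} and (f^{(-1)})' = f; f^{(-1)}(1) = 0 and f^{(-2)}(1) = μ³; f(0) = μ^{-1} and f'(0) = 0; and for all x ∈ ℝ, f^{(-2)}(x+1) = μ⁴·f(x), f^{(-1)}(x+1) = μ⁴·f'(x), and f(x+1) = μ⁴·f''(x). -/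
/-!
Put `a_j = 2α_j` and `c_j = γ_j / μ`. Then `F2, F1, f, f', f''` are the exponential sums
`∑ c_j a_j ^ n e^{a_j x}` for `n = -2, …, 2`, and differentiation raises `n` by one.
The equations `α_j e^{-α_j} = ±s` give `e^{2α_j} = α_j² / s² = μ⁴ (2α_j)²`, so translating `x` by
one multiplies by `μ⁴` and raises `n` by two. The values at `0` and `1` then reduce to
`γ₁ + γ₂ = 1` and `γ₁α₁ + γ₂α₂ = 0`.
-/

open Complex

noncomputable section

section ExpSum

variable {ι : Type*} [Fintype ι] (c a : ι → ℂ)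

def expSum (n : ℤ) (x : ℝ) : ℂ := ∑ i, c i * a i ^ n * exp (a i * x)

@[simp]
lemma expSum_apply_zero (n : ℤ) : expSum c a n 0 = ∑ i, c i * a i ^ n := by
  simp [expSum]

@[simp]
lemma expSum_fin_two (c₁ c₂ a₁ a₂ : ℂ) (n : ℤ) (x : ℝ) :
    expSum ![c₁, c₂] ![a₁, a₂] n x = c₁ * a₁ ^ n * exp (a₁ * x) + c₂ * a₂ ^ n * exp (a₂ * x) := by
  simp [expSum, Fin.sum_univ_two]

variable {c a}

lemma hasDerivAt_expSum (ha : ∀ i, a i ≠ 0) (n : ℤ) (x : ℝ) :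
    HasDerivAt (expSum c a n) (expSum c a (n + 1) x) x := by
  refine HasDerivAt.fun_sum fun i _ => ?_
  have hexp : HasDerivAt (fun y : ℝ => exp (a i * y)) (exp (a i * x) * a i) x :=
    ((hasDerivAt_id x).ofReal_comp.const_mul (a i)).cexp.congr_deriv (by simp)
  exact (hexp.const_mul (c i * a i ^ n)).congr_deriv (by rw [zpow_add_one₀ (ha i)]; ring)

lemma deriv_expSum (ha : ∀ i, a i ≠ 0) (n : ℤ) : deriv (expSum c a n) = expSum c a (n + 1) :=
  funext fun x => (hasDerivAt_expSum ha n x).deriv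

lemma expSum_add_one (ha : ∀ i, a i ≠ 0) {κ : ℂ} {m : ℤ} (hexp : ∀ i, exp (a i) = κ * a i ^ m)
    (n : ℤ) (x : ℝ) : expSum c a n (x + 1) = κ * expSum c a (n + m) x := by
  simp only [expSum, Finset.mul_sum]
  refine Finset.sum_congr rfl fun i _ => ?_
  rw [ofReal_add, ofReal_one, mul_add_one, exp_add, hexp, zpow_add₀ (ha i)]
  ring

end ExpSum

lemma exp_two_mul_eq_of_mul_exp_neg_eq {α t κ : ℂ} (h : α * exp (-α) = t)
    (hκ : κ * (2 * t) ^ 2 = 1) : exp (2 * α) = κ * (2 * α) ^ 2 := by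
  have hexp : exp (2 * α) * exp (-α) ^ 2 = 1 := by
    rw [← exp_nat_mul, ← exp_add]; push_cast; ring_nf; exact exp_zero
  subst h
  linear_combination (κ * (2 * α) ^ 2) * hexp - exp (2 * α) * hκ

lemma div_sub_add_div_sub_eq_one {K : Type*} [Field K] {a b : K} (h : a ≠ b) :
    b / (b - a) + a / (a - b) = 1 := by
  field_simp [sub_ne_zero.mpr h, sub_ne_zero.mpr h.symm]
  ring

lemma div_sub_mul_add_div_sub_mul_eq_zero {K : Type*} [Field K] {a b : K} (h : a ≠ b) :
    b / (b - a) * a + a / (a - b) * b = 0 := by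
  field_simp [sub_ne_zero.mpr h, sub_ne_zero.mpr h.symm]
  ring

/-- Properties of the explicit function `f` built from two branches of Lambert's W-function
(case `k = 2`): with `μ² = 1/(2s)`, `α₁e^{−α₁} = s`, `α₂e^{−α₂} = −s`,
`γ₁ = α₂/(α₂−α₁)`, `γ₂ = α₁/(α₁−α₂)`, and `f`, `f^{(-1)} = F1`, `f^{(-2)} = F2` defined by the
indicated exponential sums, the `F j` are successive antiderivatives of `f`, `F1 1 = 0`,
`F2 1 = μ³`, `f 0 = μ⁻¹`, `f' 0 = 0`, and `F2 (x+1) = μ⁴f(x)`, `F1 (x+1) = μ⁴f'(x)`,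
`f (x+1) = μ⁴f''(x)` for all real `x`. -/
theorem explicit_solution_properties_k_two (s μ α₁ α₂ γ₁ γ₂ : ℂ)
    (hs : s ≠ 0) (hμ : μ ≠ 0) (hα₁ : α₁ ≠ 0) (hα₂ : α₂ ≠ 0) (hαne : α₁ ≠ α₂)
    (hμ2 : μ ^ 2 = 1 / (2 * s))
    (h1 : α₁ * Complex.exp (-α₁) = s) (h2 : α₂ * Complex.exp (-α₂) = -s)
    (hγ₁ : γ₁ = α₂ / (α₂ - α₁)) (hγ₂ : γ₂ = α₁ / (α₁ - α₂))
    (f F1 F2 : ℝ → ℂ)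
    (hf : ∀ x : ℝ, f x =
      μ⁻¹ * (γ₁ * Complex.exp (2 * α₁ * (x : ℂ)) + γ₂ * Complex.exp (2 * α₂ * (x : ℂ))))
    (hF1 : ∀ x : ℝ, F1 x =
      (2 * μ)⁻¹ * (γ₁ * α₁⁻¹ * Complex.exp (2 * α₁ * (x : ℂ)) +
        γ₂ * α₂⁻¹ * Complex.exp (2 * α₂ * (x : ℂ))))
    (hF2 : ∀ x : ℝ, F2 x =
      (4 * μ)⁻¹ * (γ₁ * (α₁ ^ 2)⁻¹ * Complex.exp (2 * α₁ * (x : ℂ)) +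
        γ₂ * (α₂ ^ 2)⁻¹ * Complex.exp (2 * α₂ * (x : ℂ)))) :
    (∀ x : ℝ, HasDerivAt F2 (F1 x) x) ∧
    (∀ x : ℝ, HasDerivAt F1 (f x) x) ∧
    F1 1 = 0 ∧ F2 1 = μ ^ 3 ∧ f 0 = μ⁻¹ ∧ deriv f 0 = 0 ∧
    ∀ x : ℝ,
      F2 (x + 1) = μ ^ 4 * f x ∧
      F1 (x + 1) = μ ^ 4 * deriv f x ∧
      f (x + 1) = μ ^ 4 * deriv (deriv f) x := by
  set c : Fin 2 → ℂ := ![μ⁻¹ * γ₁, μ⁻¹ * γ₂]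
  set a : Fin 2 → ℂ := ![2 * α₁, 2 * α₂]
  have ha : ∀ i, a i ≠ 0 := by simp [a, Fin.forall_fin_two, hα₁, hα₂]
  have hμs : μ ^ 4 * (2 * s) ^ 2 = 1 := by
    rw [show μ ^ 4 = (μ ^ 2) ^ 2 by ring, hμ2]
    field_simp
  have hexp : ∀ i, exp (a i) = μ ^ 4 * a i ^ (2 : ℤ) := by
    simp only [a, Fin.forall_fin_two, Matrix.cons_val_zero, Matrix.cons_val_one, zpow_ofNat]
    exact ⟨exp_two_mul_eq_of_mul_exp_neg_eq h1 hμs,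
      exp_two_mul_eq_of_mul_exp_neg_eq h2 (by linear_combination hμs)⟩
  have hshift := expSum_add_one (c := c) ha hexp
  have hc : ∑ i, c i = μ⁻¹ := by
    simp [c, Fin.sum_univ_two, ← mul_add, hγ₁, hγ₂, div_sub_add_div_sub_eq_one hαne]
  have hca : ∑ i, c i * a i = 0 := by
    simp only [c, a, Fin.sum_univ_two, Matrix.cons_val_zero, Matrix.cons_val_one, hγ₁, hγ₂]
    linear_combination 2 * μ⁻¹ * div_sub_mul_add_div_sub_mul_eq_zero hαne
  obtain rfl : f = expSum c a 0 := funext fun x => by simp [hf, c, a]; ring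
  obtain rfl : F1 = expSum c a (-1) := funext fun x => by simp [hF1, c, a]; ring
  obtain rfl : F2 = expSum c a (-2) := funext fun x => by simp [hF2, c, a]; ring
  refine ⟨hasDerivAt_expSum ha (-2), hasDerivAt_expSum ha (-1), ?_, ?_, ?_, ?_, fun x => ?_⟩
  · simpa [hca] using hshift (-1) 0
  · rw [show (1 : ℝ) = 0 + 1 by simp, hshift]
    simp only [Int.reduceNeg, neg_add_cancel, expSum_apply_zero, zpow_zero, mul_one, hc]
    field_simp
  · simpa using hc
  · simpa [deriv_expSum ha] using hca
  · simp only [deriv_expSum ha, hshift]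
    norm_num

end
end
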